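/- arXiv:1405.4100 — 13 statements merged into one kernel-verified Lean document; each statement's English description precedes it below -/
import Mathlib

section
/- In the filtration M^f of an HDML model M through the closure set C(φ), for every n ≥ 1 and every 1 ≤ i ≤ n, the relations s_i^f and t_i^f are total functions from Q_n^f to Q_{n-1}^f: for each class [q] ∈ Q_n^f there exists exactly one class [p] ∈ Q_{n-1}^f with s_i^f([q]) = [p], and exactly one class [p'] ∈ Q_{n-1}^f with t_i^f([q]) = [p']. -/
inductive HForm (Phi : Type) : Type
  | atom : Phi → HForm Phi
  | bot  : HForm Phi
  | imp  : HForm Phi → HForm Phi → HForm Phi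
  | diaS : HForm Phi → HForm Phi
  | diaT : HForm Phi → HForm Phi
  deriving DecidableEq

namespace HForm

variable {Phi : Type}

def neg (φ : HForm Phi) : HForm Phi := imp φ bot

def top : HForm Phi := neg bot

def or' (φ ψ : HForm Phi) : HForm Phi := imp (neg φ) ψ

def and' (φ ψ : HForm Phi) : HForm Phi := neg (imp φ (neg ψ))

def iff' (φ ψ : HForm Phi) : HForm Phi := and' (imp φ ψ) (imp ψ φ)

def boxS (φ : HForm Phi) : HForm Phi := neg (diaS (neg φ))

def boxT (φ : HForm Phi) : HForm Phi := neg (diaT (neg φ))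

/-- The size of a formula: the number of occurrences of atomic propositions, `⊥`,
Boolean connectives `→`, and modal symbols `⟨s⟩`, `⟨t⟩`. -/
def size : HForm Phi → ℕ
  | atom _ => 1
  | bot => 1
  | imp a b => size a + size b + 1
  | diaS a => size a + 1
  | diaT a => size a + 1

/-- `iterT i ψ` is `⟨t⟩^i ψ`, the `i`-fold application of `⟨t⟩` to `ψ`. -/
def iterT : ℕ → HForm Phi → HForm Phi
  | 0, ψ => ψ
  | n + 1, ψ => diaT (iterT n ψ)

/-- The subformula closure `C(φ)`. -/
def closure [DecidableEq Phi] : HForm Phi → Finset (HForm Phi)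
  | atom p => {atom p}
  | bot => {bot}
  | imp a b => insert (imp a b) (closure a ∪ closure b)
  | diaS a => insert (diaS a) (closure a)
  | diaT a => insert (diaT a) (closure a)

/-- The upwards concurrency degree `↑deg`. -/
def updeg : HForm Phi → ℕ
  | atom _ => 0
  | bot => 0
  | imp a b => max (updeg a) (updeg b)
  | diaS a => updeg a + 1
  | diaT a => updeg a - 1

end HForm

/-- The data of a cubical set: a family of cells `Q_n := cell n` together with, for each
`n ≥ 1` and each `1 ≤ i ≤ n`, source and target maps `s_i, t_i : Q_n → Q_{n-1}`
(here `src n i` and `tgt n i` are the maps `s_{i+1}, t_{i+1} : Q_{n+1} → Q_n` for `i : Fin (n+1)`). -/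
structure PreCubical : Type 1 where
  cell : ℕ → Type
  src : ∀ n : ℕ, Fin (n + 1) → cell (n + 1) → cell n
  tgt : ∀ n : ℕ, Fin (n + 1) → cell (n + 1) → cell n

/-- The cubical laws `α_i ∘ β_j = β_{j-1} ∘ α_i` for `1 ≤ i < j ≤ n` and `α, β ∈ {s, t}`:
with 0-based indices `i j : Fin (n+1)`, the 1-based indices are `I = i+1` and `J = j+2`,
so that `I < J` becomes `i ≤ j`. -/
def PreCubical.CubicalLaws (H : PreCubical) : Prop :=
  (∀ (n : ℕ) (i j : Fin (n + 1)), (i : ℕ) ≤ (j : ℕ) → ∀ q : H.cell (n + 2),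
      H.src n i (H.src (n + 1) j.succ q) = H.src n j (H.src (n + 1) i.castSucc q)) ∧
  (∀ (n : ℕ) (i j : Fin (n + 1)), (i : ℕ) ≤ (j : ℕ) → ∀ q : H.cell (n + 2),
      H.src n i (H.tgt (n + 1) j.succ q) = H.tgt n j (H.src (n + 1) i.castSucc q)) ∧
  (∀ (n : ℕ) (i j : Fin (n + 1)), (i : ℕ) ≤ (j : ℕ) → ∀ q : H.cell (n + 2),
      H.tgt n i (H.src (n + 1) j.succ q) = H.src n j (H.tgt (n + 1) i.castSucc q)) ∧
  (∀ (n : ℕ) (i j : Fin (n + 1)), (i : ℕ) ≤ (j : ℕ) → ∀ q : H.cell (n + 2),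
      H.tgt n i (H.tgt (n + 1) j.succ q) = H.tgt n j (H.tgt (n + 1) i.castSucc q))

/-- HDML satisfaction over the data of a cubical set with a valuation. -/
def PreCubical.Sat (H : PreCubical) {Phi : Type} (V : ∀ n : ℕ, H.cell n → Set Phi) :
    HForm Phi → ∀ n : ℕ, H.cell n → Prop
  | .atom p, n, q => p ∈ V n q
  | .bot, _, _ => False
  | .imp a b, n, q => PreCubical.Sat H V a n q → PreCubical.Sat H V b n q
  | .diaS a, n, q => ∃ (q' : H.cell (n + 1)) (i : Fin (n + 1)),
      H.src n i q' = q ∧ PreCubical.Sat H V a (n + 1) q'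
  | .diaT _, 0, _ => False
  | .diaT a, m + 1, q => ∃ i : Fin (m + 1), PreCubical.Sat H V a m (H.tgt m i q)

/-- An HDML model: a cubical set together with a valuation. -/
structure HDMLModel (Phi : Type) : Type 1 where
  pre : PreCubical
  laws : pre.CubicalLaws
  val : ∀ n : ℕ, pre.cell n → Set Phi

/-- Satisfaction `M,q ⊨ φ` in an HDML model. -/
def HDMLModel.Sat {Phi : Type} (M : HDMLModel Phi) : HForm Phi → ∀ n : ℕ, M.pre.cell n → Prop :=
  M.pre.Sat M.val

/-- The filtration equivalence: at dimension `0` it is modal equivalence over the closure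
`C(φ)`; at dimension `n+1` it additionally requires all corresponding sources and targets to
be related at dimension `n` (this realizes the classes `[q_n]` of the filtration). -/
def FiltRel {Phi : Type} [DecidableEq Phi] (M : HDMLModel Phi) (φ : HForm Phi) :
    ∀ n : ℕ, M.pre.cell n → M.pre.cell n → Prop
  | 0, q, q' => ∀ ψ ∈ φ.closure, (M.Sat ψ 0 q ↔ M.Sat ψ 0 q')
  | n + 1, q, q' =>
      (∀ ψ ∈ φ.closure, (M.Sat ψ (n + 1) q ↔ M.Sat ψ (n + 1) q')) ∧
      ∀ i : Fin (n + 1),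
        FiltRel M φ n (M.pre.src n i q) (M.pre.src n i q') ∧
        FiltRel M φ n (M.pre.tgt n i q) (M.pre.tgt n i q')

/-- The filtration class `[q]` of a cell `q`. -/
def filtClass {Phi : Type} [DecidableEq Phi] (M : HDMLModel Phi) (φ : HForm Phi) (n : ℕ)
    (q : M.pre.cell n) : Set (M.pre.cell n) :=
  {x | FiltRel M φ n q x}


theorem FiltRel.refl' {Phi : Type} [DecidableEq Phi] (M : HDMLModel Phi) (φ : HForm Phi) :
    ∀ n (q : M.pre.cell n), FiltRel M φ n q q := by
  intro n
  induction n with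
  | zero => intro q; exact fun ψ _ => Iff.rfl
  | succ n ih => intro q; exact ⟨fun ψ _ => Iff.rfl, fun i => ⟨ih _, ih _⟩⟩

theorem FiltRel.symm' {Phi : Type} [DecidableEq Phi] (M : HDMLModel Phi) (φ : HForm Phi) :
    ∀ n (q q' : M.pre.cell n), FiltRel M φ n q q' → FiltRel M φ n q' q := by
  intro n
  induction n with
  | zero => intro q q' h ψ hψ; exact (h ψ hψ).symm
  | succ n ih =>
    intro q q' h
    exact ⟨fun ψ hψ => (h.1 ψ hψ).symm, fun i => ⟨ih _ _ (h.2 i).1, ih _ _ (h.2 i).2⟩⟩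

theorem FiltRel.trans' {Phi : Type} [DecidableEq Phi] (M : HDMLModel Phi) (φ : HForm Phi) :
    ∀ n (q q' q'' : M.pre.cell n),
      FiltRel M φ n q q' → FiltRel M φ n q' q'' → FiltRel M φ n q q'' := by
  intro n
  induction n with
  | zero => intro q q' q'' h h' ψ hψ; exact (h ψ hψ).trans (h' ψ hψ)
  | succ n ih =>
    intro q q' q'' h h'
    exact ⟨fun ψ hψ => (h.1 ψ hψ).trans (h'.1 ψ hψ),
      fun i => ⟨ih _ _ _ (h.2 i).1 (h'.2 i).1, ih _ _ _ (h.2 i).2 (h'.2 i).2⟩⟩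

theorem filtClass_eq_of_rel {Phi : Type} [DecidableEq Phi] (M : HDMLModel Phi) (φ : HForm Phi)
    (n : ℕ) (a b : M.pre.cell n) (h : FiltRel M φ n a b) :
    filtClass M φ n a = filtClass M φ n b := by
  ext x
  constructor
  · exact fun hx => FiltRel.trans' M φ n _ _ _ (FiltRel.symm' M φ n _ _ h) hx
  · exact fun hx => FiltRel.trans' M φ n _ _ _ h hx

/-- In the filtration of an HDML model through `C(φ)`, the relations `s_i^f` and
`t_i^f` are total functions from `Q_n^f` to `Q_{n-1}^f`: for each class `[q]` there is exactly
one class `[p]` containing all the `s_i`-images of members of `[q]`, and exactly one class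
`[p']` containing all the `t_i`-images of members of `[q]`. -/
theorem filtration_maps_are_functions {Phi : Type} [DecidableEq Phi] (M : HDMLModel Phi)
    (φ : HForm Phi) (n : ℕ) (i : Fin (n + 1)) (q : M.pre.cell (n + 1)) :
    (∃! P : Set (M.pre.cell n),
      (∃ p : M.pre.cell n, P = filtClass M φ n p) ∧
      ∀ r ∈ filtClass M φ (n + 1) q, M.pre.src n i r ∈ P) ∧
    (∃! P : Set (M.pre.cell n),
      (∃ p : M.pre.cell n, P = filtClass M φ n p) ∧
      ∀ r ∈ filtClass M φ (n + 1) q, M.pre.tgt n i r ∈ P) := by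
  constructor
  · refine ⟨filtClass M φ n (M.pre.src n i q), ⟨⟨_, rfl⟩, fun r hr => (hr.2 i).1⟩, ?_⟩
    rintro P ⟨⟨p, rfl⟩, hP⟩
    have hq : M.pre.src n i q ∈ filtClass M φ n p :=
      hP q (FiltRel.refl' M φ (n + 1) q)
    exact filtClass_eq_of_rel M φ n p (M.pre.src n i q) hq
  · refine ⟨filtClass M φ n (M.pre.tgt n i q), ⟨⟨_, rfl⟩, fun r hr => (hr.2 i).2⟩, ?_⟩
    rintro P ⟨⟨p, rfl⟩, hP⟩
    have hq : M.pre.tgt n i q ∈ filtClass M φ n p :=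
      hP q (FiltRel.refl' M φ (n + 1) q)
    exact filtClass_eq_of_rel M φ n p (M.pre.tgt n i q) hq
end

section
/- For every n ∈ ℕ, the set Q_n^f of n-dimensional cells of the filtration M^f of an HDML model M through the closure set C(φ) is finite, and its size is bounded above by 2^{|φ|·N}, where N = n! · Σ_{k=0}^{n} 2^k/(n−k)!. -/
/-- `Nbound n = n! · Σ_{k=0}^{n} 2^k/(n−k)!  =  Σ_{k=0}^{n} 2^k · n!/(n−k)!`. -/
def Nbound (n : ℕ) : ℕ := ∑ k ∈ Finset.range (n + 1), 2 ^ k * n.descFactorial k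


/-! The classes of the filtration at level `n` are the fibres of the map sending a cell to its
signature: the set of formulas of `C(φ)` it satisfies, together with the signatures of all its
faces. Signatures at level `n + 1` consist of a subset of `C(φ)` and `n + 1` pairs of level-`n`
signatures, so there are at most `2 ^ |C(φ)| · (S_n ^ 2) ^ (n + 1)` of them, where `S_n` bounds
the level-`n` count. Since `|C(φ)| ≤ |φ|`, this unfolds to `2 ^ (|φ| · N)` because `N` satisfies
`N_0 = 1` and `N_{n+1} = 1 + 2 (n + 1) N_n`. -/

theorem Set.finite_range_setOf_and_card_le_of_iff_eq {α β : Type*} [Finite β] (f : α → β)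
    {r : α → α → Prop} (hr : ∀ a b, r a b ↔ f a = f b) :
    (Set.range fun a => {b | r a b}).Finite ∧
      Nat.card (Set.range fun a => {b | r a b}) ≤ Nat.card β := by
  have hsub : (Set.range fun a => {b | r a b}) ⊆ Set.range fun c => {b | c = f b} := by
    rintro _ ⟨a, rfl⟩
    exact ⟨f a, by simp only [hr]⟩
  have hfin := Set.finite_range fun c => {b | c = f b}
  exact ⟨hfin.subset hsub, (Nat.card_mono hfin hsub).trans (Finite.card_range_le _)⟩

namespace HForm

variable {Phi : Type} [DecidableEq Phi]

theorem card_closure_le_size (φ : HForm Phi) : φ.closure.card ≤ φ.size := by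
  induction φ with
  | atom p => simp [closure, size]
  | bot => simp [closure, size]
  | imp a b iha ihb =>
    calc (imp a b).closure.card ≤ (a.closure ∪ b.closure).card + 1 := Finset.card_insert_le _ _
      _ ≤ a.closure.card + b.closure.card + 1 := by grw [Finset.card_union_le]
      _ ≤ (imp a b).size := by simp only [size]; omega
  | diaS a ih =>
    calc (diaS a).closure.card ≤ a.closure.card + 1 := Finset.card_insert_le _ _
      _ ≤ (diaS a).size := by simp only [size]; omega
  | diaT a ih =>
    calc (diaT a).closure.card ≤ a.closure.card + 1 := Finset.card_insert_le _ _
      _ ≤ (diaT a).size := by simp only [size]; omega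

end HForm

theorem Nbound_zero : Nbound 0 = 1 := by simp [Nbound]

theorem Nbound_succ (n : ℕ) : Nbound (n + 1) = 1 + 2 * (n + 1) * Nbound n := by
  unfold Nbound
  rw [Finset.sum_range_succ', Finset.mul_sum]
  simp only [Nat.succ_descFactorial_succ, pow_succ, Nat.descFactorial_zero, pow_zero, mul_one]
  rw [add_comm]
  congr 1
  exact Finset.sum_congr rfl fun k _ => by ring

section Signature

variable {Phi : Type} [DecidableEq Phi]

def Signature (φ : HForm Phi) : ℕ → Type
  | 0 => φ.closure → Prop
  | n + 1 => (φ.closure → Prop) × (Fin (n + 1) → Signature φ n × Signature φ n)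

instance Signature.finite (φ : HForm Phi) : ∀ n, Finite (Signature φ n)
  | 0 => inferInstanceAs (Finite (φ.closure → Prop))
  | n + 1 =>
    have := Signature.finite φ n
    inferInstanceAs (Finite ((φ.closure → Prop) × (Fin (n + 1) → Signature φ n × Signature φ n)))

theorem Signature.card_le (φ : HForm Phi) :
    ∀ n, Nat.card (Signature φ n) ≤ 2 ^ (φ.size * Nbound n)
  | 0 => by
    have hcard : Nat.card (Signature φ 0) = 2 ^ φ.closure.card := by
      simp [Signature]
    rw [hcard, Nbound_zero, mul_one]
    exact Nat.pow_le_pow_right two_pos φ.card_closure_le_size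
  | n + 1 => by
    have hcard : Nat.card (Signature φ (n + 1)) =
        2 ^ φ.closure.card * (Nat.card (Signature φ n) * Nat.card (Signature φ n)) ^ (n + 1) := by
      simp [Signature, Nat.card_fun]
    have ih := Signature.card_le φ n
    calc Nat.card (Signature φ (n + 1))
        ≤ 2 ^ φ.size * (2 ^ (φ.size * Nbound n) * 2 ^ (φ.size * Nbound n)) ^ (n + 1) := by
          rw [hcard]
          gcongr
          · exact one_le_two
          · exact φ.card_closure_le_size
      _ = 2 ^ (φ.size * Nbound (n + 1)) := by
          rw [← pow_add, ← pow_mul, ← pow_add, Nbound_succ]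
          ring_nf

def signature (M : HDMLModel Phi) (φ : HForm Phi) : ∀ n, M.pre.cell n → Signature φ n
  | 0, q => fun ψ => M.Sat ψ 0 q
  | n + 1, q =>
    ((fun ψ => M.Sat ψ (n + 1) q,
      fun i => (signature M φ n (M.pre.src n i q), signature M φ n (M.pre.tgt n i q))) :
      (φ.closure → Prop) × (Fin (n + 1) → Signature φ n × Signature φ n))

theorem filtRel_iff_signature_eq (M : HDMLModel Phi) (φ : HForm Phi) :
    ∀ n (q q' : M.pre.cell n), FiltRel M φ n q q' ↔ signature M φ n q = signature M φ n q'
  | 0, q, q' => by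
    change _ ↔ @Eq (φ.closure → Prop) _ _
    simp only [FiltRel, signature, funext_iff, eq_iff_iff, Subtype.forall]
  | n + 1, q, q' => by
    change _ ↔ @Eq ((φ.closure → Prop) × (Fin (n + 1) → Signature φ n × Signature φ n)) _ _
    simp only [FiltRel, signature, Prod.ext_iff, funext_iff, eq_iff_iff, Subtype.forall,
      filtRel_iff_signature_eq M φ n]

end Signature

/-- Each level `Q_n^f` of the filtration is finite, of size at most
`2^{|φ|·N}` where `N = n! · Σ_{k=0}^{n} 2^k/(n−k)!`. -/
theorem filtration_level_size {Phi : Type} [DecidableEq Phi] (M : HDMLModel Phi)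
    (φ : HForm Phi) (n : ℕ) :
    (Set.range (filtClass M φ n)).Finite ∧
    Nat.card (Set.range (filtClass M φ n)) ≤ 2 ^ (φ.size * Nbound n) := by
  obtain ⟨hfin, hcard⟩ :=
    Set.finite_range_setOf_and_card_le_of_iff_eq _ (filtRel_iff_signature_eq M φ n)
  exact ⟨hfin, hcard.trans (Signature.card_le φ n)⟩
end

section
/- Filtration lemma: let M^f be the filtration of an HDML model M through the closure set C(φ). For every formula ψ ∈ C(φ) and every cell q of M: M,q ⊨ ψ if and only if M^f,[q] ⊨ ψ. -/
lemma HForm.mem_closure_self {Phi : Type} [DecidableEq Phi] (ψ : HForm Phi) :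
    ψ ∈ ψ.closure := by
  cases ψ <;> simp [HForm.closure]

lemma HForm.closure_subset {Phi : Type} [DecidableEq Phi] :
    ∀ (φ ψ : HForm Phi), ψ ∈ φ.closure → ψ.closure ⊆ φ.closure := by
  intro φ
  induction φ with
  | atom p =>
      intro ψ h
      simp [HForm.closure] at h; subst h; simp [HForm.closure]
  | bot =>
      intro ψ h
      simp [HForm.closure] at h; subst h; simp [HForm.closure]
  | imp a b iha ihb =>
      intro ψ h
      simp [HForm.closure] at h
      rcases h with h | h | h
      · subst h; exact fun x hx => hx
      · intro x hx
        simp [HForm.closure]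
        exact Or.inr (Or.inl (iha ψ h hx))
      · intro x hx
        simp [HForm.closure]
        exact Or.inr (Or.inr (ihb ψ h hx))
  | diaS a iha =>
      intro ψ h
      simp [HForm.closure] at h
      rcases h with h | h
      · subst h; exact fun x hx => hx
      · intro x hx
        simp [HForm.closure]
        exact Or.inr (iha ψ h hx)
  | diaT a iha =>
      intro ψ h
      simp [HForm.closure] at h
      rcases h with h | h
      · subst h; exact fun x hx => hx
      · intro x hx
        simp [HForm.closure]
        exact Or.inr (iha ψ h hx)

lemma filtRel_sat {Phi : Type} [DecidableEq Phi] (M : HDMLModel Phi) (φ : HForm Phi)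
    {n : ℕ} {q q' : M.pre.cell n} (h : FiltRel M φ n q q')
    {ψ : HForm Phi} (hψ : ψ ∈ φ.closure) : M.Sat ψ n q ↔ M.Sat ψ n q' := by
  cases n with
  | zero => exact h ψ hψ
  | succ m => exact h.1 ψ hψ

lemma filtRel_equiv {Phi : Type} [DecidableEq Phi] (M : HDMLModel Phi) (φ : HForm Phi) :
    ∀ n : ℕ, Equivalence (FiltRel M φ n) := by
  intro n
  induction n with
  | zero =>
      exact ⟨fun q ψ _ => Iff.rfl, fun h ψ hψ => (h ψ hψ).symm,
        fun h1 h2 ψ hψ => (h1 ψ hψ).trans (h2 ψ hψ)⟩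
  | succ m ih =>
      refine ⟨fun q => ⟨fun ψ _ => Iff.rfl, fun i => ⟨ih.refl _, ih.refl _⟩⟩, ?_, ?_⟩
      · rintro q q' ⟨h1, h2⟩
        exact ⟨fun ψ hψ => (h1 ψ hψ).symm,
          fun i => ⟨ih.symm (h2 i).1, ih.symm (h2 i).2⟩⟩
      · rintro q q' q'' ⟨h1, h2⟩ ⟨h1', h2'⟩
        exact ⟨fun ψ hψ => (h1 ψ hψ).trans (h1' ψ hψ),
          fun i => ⟨ih.trans (h2 i).1 (h2' i).1, ih.trans (h2 i).2 (h2' i).2⟩⟩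

lemma filtRel_of_quot_eq {Phi : Type} [DecidableEq Phi] (M : HDMLModel Phi) (φ : HForm Phi)
    {n : ℕ} {q q' : M.pre.cell n}
    (h : Quot.mk (FiltRel M φ n) q = Quot.mk (FiltRel M φ n) q') :
    FiltRel M φ n q q' :=
  ((filtRel_equiv M φ n).eqvGen_iff).mp (Quot.eq.mp h)

/-- Filtration lemma: for the filtration of `M` through `C(φ)` (given by maps
and valuation on the classes commuting with the quotient projection), for every `ψ ∈ C(φ)`
and every cell `q` of `M`:  `M,q ⊨ ψ` iff `M^f,[q] ⊨ ψ`. -/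
theorem filtration_lemma {Phi : Type} [DecidableEq Phi] (M : HDMLModel Phi) (φ : HForm Phi)
    (src' tgt' : ∀ n : ℕ, Fin (n + 1) → Quot (FiltRel M φ (n + 1)) → Quot (FiltRel M φ n))
    (val' : ∀ n : ℕ, Quot (FiltRel M φ n) → Set Phi)
    (hsrc : ∀ (n : ℕ) (i : Fin (n + 1)) (q : M.pre.cell (n + 1)),
        src' n i (Quot.mk _ q) = Quot.mk _ (M.pre.src n i q))
    (htgt : ∀ (n : ℕ) (i : Fin (n + 1)) (q : M.pre.cell (n + 1)),
        tgt' n i (Quot.mk _ q) = Quot.mk _ (M.pre.tgt n i q))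
    (hval : ∀ (n : ℕ) (q : M.pre.cell n), val' n (Quot.mk _ q) = M.val n q) :
    ∀ ψ ∈ φ.closure, ∀ (n : ℕ) (q : M.pre.cell n),
      M.Sat ψ n q ↔
        PreCubical.Sat ⟨fun n => Quot (FiltRel M φ n), src', tgt'⟩ val' ψ n (Quot.mk _ q) := by
  intro ψ
  induction ψ with
  | atom p =>
      intro _ n q
      simp [HDMLModel.Sat, PreCubical.Sat, hval]
  | bot =>
      intro _ n q
      simp [HDMLModel.Sat, PreCubical.Sat]
  | imp a b iha ihb =>
      intro h n q
      have ha : a ∈ φ.closure :=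
        HForm.closure_subset φ _ h (by simp [HForm.closure, HForm.mem_closure_self])
      have hb : b ∈ φ.closure :=
        HForm.closure_subset φ _ h (by simp [HForm.closure, HForm.mem_closure_self])
      simp only [HDMLModel.Sat, PreCubical.Sat] at *
      exact imp_congr (iha ha n q) (ihb hb n q)
  | diaS a iha =>
      intro h n q
      have ha : a ∈ φ.closure :=
        HForm.closure_subset φ _ h (by simp [HForm.closure, HForm.mem_closure_self])
      constructor
      · rintro ⟨q', i, hq', hs⟩
        refine ⟨Quot.mk _ q', i, ?_, (iha ha (n + 1) q').mp hs⟩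
        show src' n i _ = _
        rw [hsrc, hq']
      · rintro ⟨Q', i, hQ', hs⟩
        obtain ⟨q', rfl⟩ := Quot.exists_rep Q'
        replace hQ' : src' n i (Quot.mk _ q') = Quot.mk _ q := hQ'
        rw [hsrc] at hQ'
        have hrel : FiltRel M φ n (M.pre.src n i q') q := filtRel_of_quot_eq M φ hQ'
        have : M.Sat (HForm.diaS a) n (M.pre.src n i q') :=
          ⟨q', i, rfl, (iha ha (n + 1) q').mpr hs⟩
        exact (filtRel_sat M φ hrel h).mp this
  | diaT a iha =>
      intro h n q
      have ha : a ∈ φ.closure :=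
        HForm.closure_subset φ _ h (by simp [HForm.closure, HForm.mem_closure_self])
      cases n with
      | zero => simp [HDMLModel.Sat, PreCubical.Sat]
      | succ m =>
          constructor
          · rintro ⟨i, hs⟩
            refine ⟨i, ?_⟩
            show PreCubical.Sat ⟨fun n => Quot (FiltRel M φ n), src', tgt'⟩ val' a m (tgt' m i (Quot.mk _ q))
            rw [htgt]
            exact (iha ha m _).mp hs
          · rintro ⟨i, hs⟩
            replace hs : PreCubical.Sat ⟨fun n => Quot (FiltRel M φ n), src', tgt'⟩ val' a m (tgt' m i (Quot.mk _ q)) := hs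
            rw [htgt] at hs
            exact ⟨i, (iha ha m _).mpr hs⟩
end

section
/- Concurrency boundedness: if an HDML formula φ is satisfiable, say M,q ⊨ φ with q ∈ Q_k, then there exists an HDML model M' and a cell q' ∈ Q'_k with M',q' ⊨ φ such that Q'_m = ∅ for all m > ↑deg(φ) + k. -/
/-- Truncation of a precubical set at level `N`. -/
def PreCubical.trunc (H : PreCubical) (N : ℕ) : PreCubical where
  cell n := {_q : H.cell n // n ≤ N}
  src n i q := ⟨H.src n i q.1, Nat.le_of_succ_le q.2⟩
  tgt n i q := ⟨H.tgt n i q.1, Nat.le_of_succ_le q.2⟩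

theorem PreCubical.trunc_laws (H : PreCubical) (hl : H.CubicalLaws) (N : ℕ) :
    (H.trunc N).CubicalLaws := by
  obtain ⟨h1, h2, h3, h4⟩ := hl
  refine ⟨?_, ?_, ?_, ?_⟩ <;> intro n i j hij q <;>
    exact Subtype.ext (by first
      | exact h1 n i j hij q.1 | exact h2 n i j hij q.1
      | exact h3 n i j hij q.1 | exact h4 n i j hij q.1)

theorem trunc_sat {Phi : Type} (M : HDMLModel Phi) (N : ℕ) :
    ∀ (φ : HForm Phi) (n : ℕ) (q : (M.pre.trunc N).cell n), φ.updeg + n ≤ N →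
      (M.pre.Sat M.val φ n q.1 ↔
        (M.pre.trunc N).Sat (fun n q => M.val n q.1) φ n q) := by
  intro φ
  induction φ with
  | atom p => intro n q _; rfl
  | bot => intro n q _; rfl
  | imp a b iha ihb =>
    intro n q hle
    simp only [HForm.updeg] at hle
    exact Iff.imp (iha n q (by omega)) (ihb n q (by omega))
  | diaS a ih =>
    intro n q hle
    simp only [HForm.updeg] at hle
    constructor
    · rintro ⟨q', i, hsrc, hsat⟩
      exact ⟨⟨q', by omega⟩, i, Subtype.ext hsrc, (ih (n + 1) ⟨q', by omega⟩ (by omega)).1 hsat⟩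
    · rintro ⟨q', i, hsrc, hsat⟩
      exact ⟨q'.1, i, congrArg Subtype.val hsrc, (ih (n + 1) q' (by omega)).2 hsat⟩
  | diaT a ih =>
    intro n q hle
    simp only [HForm.updeg] at hle
    match n, q with
    | 0, q => exact Iff.rfl
    | m + 1, q =>
      constructor
      · rintro ⟨i, hsat⟩
        exact ⟨i, (ih m ⟨M.pre.tgt m i q.1, by omega⟩ (by omega)).1 hsat⟩
      · rintro ⟨i, hsat⟩
        exact ⟨i, (ih m ⟨M.pre.tgt m i q.1, by omega⟩ (by omega)).2 hsat⟩

/-- Concurrency boundedness: if `M,q ⊨ φ` with `q ∈ Q_k`, then there is a model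
with all levels `Q_m`, for `m > ↑deg(φ) + k`, empty, satisfying `φ` (at a cell of
dimension `k`). -/
theorem concurrency_boundedness {Phi : Type} (φ : HForm Phi) (M : HDMLModel Phi) (k : ℕ)
    (q : M.pre.cell k) (h : M.Sat φ k q) :
    ∃ (M' : HDMLModel Phi) (q' : M'.pre.cell k),
      M'.Sat φ k q' ∧ ∀ m : ℕ, φ.updeg + k < m → IsEmpty (M'.pre.cell m) := by
  refine ⟨⟨M.pre.trunc (φ.updeg + k), M.pre.trunc_laws M.laws _, fun n q => M.val n q.1⟩,
    ⟨q, Nat.le_add_left k _⟩, (trunc_sat M (φ.updeg + k) φ k ⟨q, Nat.le_add_left k _⟩ le_rfl).1 h,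
    fun m hm => ⟨fun q => absurd q.2 (by omega)⟩⟩
end

section
/- Soundness of the HDML axiomatic system: for every HDML formula φ, if ⊢ φ then φ is valid, i.e. M,q ⊨ φ for every HDML model M and every cell q of M. -/
/-- A Boolean valuation respecting `⊥` and `→` (and treating every other formula as atomic). -/
def PropValuation {Phi : Type} (f : HForm Phi → Bool) : Prop :=
  f HForm.bot = false ∧ ∀ a b : HForm Phi, f (HForm.imp a b) = (!(f a) || f b)

/-- `φ` is an instance of a propositional tautology. -/
def IsTautInstance {Phi : Type} (φ : HForm Phi) : Prop :=
  ∀ f : HForm Phi → Bool, PropValuation f → f φ = true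

/-- Boolean combinations of atomic propositions. -/
inductive IsPropForm {Phi : Type} : HForm Phi → Prop
  | atom (p : Phi) : IsPropForm (HForm.atom p)
  | bot : IsPropForm HForm.bot
  | imp {a b : HForm Phi} : IsPropForm a → IsPropForm b → IsPropForm (HForm.imp a b)

/-- Conjunction of a list of formulas. -/
def conjList {Phi : Type} : List (HForm Phi) → HForm Phi
  | [] => HForm.top
  | [ψ] => ψ
  | ψ :: l => HForm.and' ψ (conjList l)

/-- Uniform substitution of formulas for atomic propositions. -/
def HForm.subst {Phi : Type} (σ : Phi → HForm Phi) : HForm Phi → HForm Phi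
  | .atom p => σ p
  | .bot => .bot
  | .imp a b => .imp (HForm.subst σ a) (HForm.subst σ b)
  | .diaS a => .diaS (HForm.subst σ a)
  | .diaT a => .diaT (HForm.subst σ a)

/-- Derivability `⊢ φ` in the HDML axiomatic system. -/
inductive Deriv {Phi : Type} : HForm Phi → Prop
  /-- all instances of propositional tautologies -/
  | taut {φ : HForm Phi} : IsTautInstance φ → Deriv φ
  /-- `⟨s⟩⊥ ↔ ⊥` -/
  | diaS_bot : Deriv (HForm.iff' (HForm.diaS HForm.bot) HForm.bot)
  /-- `⟨t⟩⊥ ↔ ⊥` -/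
  | diaT_bot : Deriv (HForm.iff' (HForm.diaT HForm.bot) HForm.bot)
  /-- `⟨s⟩(φ∨φ') ↔ ⟨s⟩φ∨⟨s⟩φ'` -/
  | diaS_or (φ φ' : HForm Phi) :
      Deriv (HForm.iff' (HForm.diaS (HForm.or' φ φ')) (HForm.or' (HForm.diaS φ) (HForm.diaS φ')))
  /-- `⟨t⟩(φ∨φ') ↔ ⟨t⟩φ∨⟨t⟩φ'` -/
  | diaT_or (φ φ' : HForm Phi) :
      Deriv (HForm.iff' (HForm.diaT (HForm.or' φ φ')) (HForm.or' (HForm.diaT φ) (HForm.diaT φ')))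
  /-- `[s]φ ↔ ¬⟨s⟩¬φ` -/
  | boxS_def (φ : HForm Phi) :
      Deriv (HForm.iff' (HForm.boxS φ) (HForm.neg (HForm.diaS (HForm.neg φ))))
  /-- `[t]φ ↔ ¬⟨t⟩¬φ` -/
  | boxT_def (φ : HForm Phi) :
      Deriv (HForm.iff' (HForm.boxT φ) (HForm.neg (HForm.diaT (HForm.neg φ))))
  /-- `⟨t⟩_i → ⟨t⟩^i⊤` for `i ≥ 1`, where `⟨t⟩_i` is a conjunction `⟨t⟩δ_1∧…∧⟨t⟩δ_i` with the
  `δ_j` pairwise propositionally inconsistent Boolean combinations of atomic propositions -/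
  | t_count (i : ℕ) (hi : 1 ≤ i) (δ : Fin i → HForm Phi)
      (hprop : ∀ j, IsPropForm (δ j))
      (hinc : ∀ j k, j ≠ k → IsTautInstance (HForm.neg (HForm.and' (δ j) (δ k)))) :
      Deriv (HForm.imp (conjList (List.ofFn fun j => HForm.diaT (δ j))) (HForm.iterT i HForm.top))
  /-- `⟨t⟩²⊤ → (⟨t⟩[t]φ → [t]⟨t⟩φ)` -/
  | tt_perm (φ : HForm Phi) :
      Deriv (HForm.imp (HForm.iterT 2 HForm.top)
        (HForm.imp (HForm.diaT (HForm.boxT φ)) (HForm.boxT (HForm.diaT φ))))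
  /-- `⟨s⟩[t]φ → [t]⟨s⟩φ` -/
  | st_perm (φ : HForm Phi) :
      Deriv (HForm.imp (HForm.diaS (HForm.boxT φ)) (HForm.boxT (HForm.diaS φ)))
  /-- `⟨t⟩[s]φ → [s]⟨t⟩φ` -/
  | ts_perm (φ : HForm Phi) :
      Deriv (HForm.imp (HForm.diaT (HForm.boxS φ)) (HForm.boxS (HForm.diaT φ)))
  /-- `⟨s⟩⟨t⟩^i⊤ → [s]⟨t⟩^i⊤` for every `i ≥ 0` -/
  | s_level (i : ℕ) :
      Deriv (HForm.imp (HForm.diaS (HForm.iterT i HForm.top)) (HForm.boxS (HForm.iterT i HForm.top)))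
  /-- `⟨t⟩⟨t⟩^i⊤ → [t]⟨t⟩^i⊤` for every `i ≥ 0` -/
  | t_level (i : ℕ) :
      Deriv (HForm.imp (HForm.diaT (HForm.iterT i HForm.top)) (HForm.boxT (HForm.iterT i HForm.top)))
  /-- `⟨t⟩^i⊤ → [s]⟨t⟩⟨t⟩^i⊤` for every `i ≥ 0` -/
  | level_up (i : ℕ) :
      Deriv (HForm.imp (HForm.iterT i HForm.top) (HForm.boxS (HForm.diaT (HForm.iterT i HForm.top))))
  /-- `⟨s⟩⟨t⟩⟨t⟩^i⊤ → ⟨t⟩^i⊤` for every `i ≥ 0` -/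
  | level_down (i : ℕ) :
      Deriv (HForm.imp (HForm.diaS (HForm.diaT (HForm.iterT i HForm.top))) (HForm.iterT i HForm.top))
  /-- `⟨s⟩⟨s⟩⟨t⟩φ → ⟨s⟩⟨t⟩⟨s⟩φ` -/
  | sst (φ : HForm Phi) :
      Deriv (HForm.imp (HForm.diaS (HForm.diaS (HForm.diaT φ))) (HForm.diaS (HForm.diaT (HForm.diaS φ))))
  /-- `⟨s⟩⟨t⟩⟨t⟩φ → ⟨t⟩⟨s⟩⟨t⟩φ` -/
  | stt (φ : HForm Phi) :
      Deriv (HForm.imp (HForm.diaS (HForm.diaT (HForm.diaT φ))) (HForm.diaT (HForm.diaS (HForm.diaT φ))))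
  /-- modus ponens -/
  | mp {φ φ' : HForm Phi} : Deriv φ → Deriv (HForm.imp φ φ') → Deriv φ'
  /-- from `φ→φ'` infer `⟨s⟩φ→⟨s⟩φ'` -/
  | monoS {φ φ' : HForm Phi} : Deriv (HForm.imp φ φ') → Deriv (HForm.imp (HForm.diaS φ) (HForm.diaS φ'))
  /-- from `φ→φ'` infer `⟨t⟩φ→⟨t⟩φ'` -/
  | monoT {φ φ' : HForm Phi} : Deriv (HForm.imp φ φ') → Deriv (HForm.imp (HForm.diaT φ) (HForm.diaT φ'))
  /-- uniform substitution -/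
  | usubst {φ : HForm Phi} (σ : Phi → HForm Phi) : Deriv φ → Deriv (HForm.subst σ φ)

/-!
Soundness is proved by induction on derivations, checking every axiom semantically. Uniform
substitution is sound because substituting `σ` amounts to changing the valuation to the one
assigning to each cell the atoms `p` with `σ p` true there. The permutation axioms (`st`, `ts`,
`tt`, `sst`, `stt`) all come down to exchanging two face maps in distinct directions,
`α_{i'} ∘ β_j = β_{j'} ∘ α_i`, which is what the cubical laws say once the indices are tracked
with `Fin.succAbove`. The axiom `⟨t⟩_i → ⟨t⟩^i⊤` holds because pairwise inconsistent `δ`'s are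
witnessed at pairwise distinct target faces, and an `n`-cell has only `n` of them.
-/

section FacesCommute

variable {C : ℕ → Type}

def FacesCommute (f g : ∀ n : ℕ, Fin (n + 1) → C (n + 1) → C n) : Prop :=
  ∀ (n : ℕ) (i j : Fin (n + 1)), (i : ℕ) ≤ (j : ℕ) → ∀ q : C (n + 2),
    f n i (g (n + 1) j.succ q) = g n j (f (n + 1) i.castSucc q)

variable {f g : ∀ n : ℕ, Fin (n + 1) → C (n + 1) → C n}

/-- Swapping two face maps of a cube: seen from `q`, direction `J` of the face `f_I q` is
`I.succAbove J`. -/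
theorem FacesCommute.exists_comp_succAbove (hfg : FacesCommute f g) (hgf : FacesCommute g f)
    {n : ℕ} (I : Fin (n + 2)) (J : Fin (n + 1)) (q : C (n + 2)) :
    ∃ I' : Fin (n + 1), f n I' (g (n + 1) (I.succAbove J) q) = g n J (f (n + 1) I q) := by
  rcases lt_or_ge J.castSucc I with hJI | hIJ
  · have hI : I ≠ 0 := Fin.ne_zero_of_lt hJI
    refine ⟨I.pred hI, ?_⟩
    have hle : (J : ℕ) ≤ (I.pred hI : ℕ) := by
      rw [Fin.val_pred]; rw [Fin.lt_def, Fin.val_castSucc] at hJI; omega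
    rw [Fin.succAbove_of_castSucc_lt _ _ hJI, ← hgf n J (I.pred hI) hle, Fin.succ_pred]
  · have hI : I ≠ Fin.last (n + 1) :=
      Fin.ne_last_of_lt (lt_of_le_of_lt hIJ (Fin.castSucc_lt_last J))
    refine ⟨I.castPred hI, ?_⟩
    have hle : (I.castPred hI : ℕ) ≤ (J : ℕ) := by
      rw [Fin.coe_castPred]; rwa [Fin.le_def, Fin.val_castSucc] at hIJ
    rw [Fin.succAbove_of_le_castSucc _ _ hIJ, hfg n _ J hle, Fin.castSucc_castPred]

theorem FacesCommute.exists_comp_of_ne (hfg : FacesCommute f g) (hgf : FacesCommute g f)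
    {n : ℕ} {I J : Fin (n + 2)} (hIJ : I ≠ J) (q : C (n + 2)) :
    ∃ I' J' : Fin (n + 1), f n I' (g (n + 1) J q) = g n J' (f (n + 1) I q) := by
  obtain ⟨J', rfl⟩ := Fin.exists_succAbove_eq hIJ.symm
  obtain ⟨I', h⟩ := hfg.exists_comp_succAbove hgf I J' q
  exact ⟨I', J', h⟩

end FacesCommute

namespace PreCubical

open HForm

variable {H : PreCubical}

theorem CubicalLaws.src_src (hH : H.CubicalLaws) : FacesCommute H.src H.src := hH.1
theorem CubicalLaws.src_tgt (hH : H.CubicalLaws) : FacesCommute H.src H.tgt := hH.2.1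
theorem CubicalLaws.tgt_src (hH : H.CubicalLaws) : FacesCommute H.tgt H.src := hH.2.2.1
theorem CubicalLaws.tgt_tgt (hH : H.CubicalLaws) : FacesCommute H.tgt H.tgt := hH.2.2.2

variable {Phi : Type} {V : ∀ n : ℕ, H.cell n → Set Phi} {a b : HForm Phi}
  {n : ℕ} {q : H.cell n}

@[simp] theorem sat_bot : ¬ H.Sat V bot n q := id

@[simp] theorem sat_imp :
    H.Sat V (imp a b) n q ↔ (H.Sat V a n q → H.Sat V b n q) := Iff.rfl

@[simp] theorem sat_neg : H.Sat V (neg a) n q ↔ ¬ H.Sat V a n q := Iff.rfl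

@[simp] theorem sat_top : H.Sat V top n q := id

@[simp] theorem sat_and' :
    H.Sat V (and' a b) n q ↔ H.Sat V a n q ∧ H.Sat V b n q := by
  simp only [and', sat_neg, sat_imp]; tauto

@[simp] theorem sat_or' :
    H.Sat V (or' a b) n q ↔ H.Sat V a n q ∨ H.Sat V b n q := by
  simp only [or', sat_neg, sat_imp]; tauto

@[simp] theorem sat_iff' :
    H.Sat V (iff' a b) n q ↔ (H.Sat V a n q ↔ H.Sat V b n q) := by
  simp only [iff', sat_and', sat_imp, iff_def]

@[simp] theorem sat_diaS :
    H.Sat V (diaS a) n q ↔ ∃ (q' : H.cell (n + 1)) (i : Fin (n + 1)),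
      H.src n i q' = q ∧ H.Sat V a (n + 1) q' := Iff.rfl

@[simp] theorem sat_diaT_zero {q : H.cell 0} : ¬ H.Sat V (diaT a) 0 q := id

@[simp] theorem sat_diaT_succ {q : H.cell (n + 1)} :
    H.Sat V (diaT a) (n + 1) q ↔ ∃ i : Fin (n + 1), H.Sat V a n (H.tgt n i q) := Iff.rfl

@[simp] theorem sat_boxS :
    H.Sat V (boxS a) n q ↔ ∀ (q' : H.cell (n + 1)) (i : Fin (n + 1)),
      H.src n i q' = q → H.Sat V a (n + 1) q' := by
  simp [boxS]

@[simp] theorem sat_boxT_zero {q : H.cell 0} : H.Sat V (boxT a) 0 q := id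

@[simp] theorem sat_boxT_succ {q : H.cell (n + 1)} :
    H.Sat V (boxT a) (n + 1) q ↔ ∀ i : Fin (n + 1), H.Sat V a n (H.tgt n i q) := by
  simp [boxT]

theorem sat_iterT_top_iff (i : ℕ) : H.Sat V (iterT i top) n q ↔ i ≤ n := by
  induction i generalizing n with
  | zero => simp [iterT]
  | succ i ih =>
    cases n with
    | zero => simp [iterT]
    | succ n => simp [iterT, ih]

theorem sat_of_mem_conjList {l : List (HForm Phi)}
    (h : H.Sat V (conjList l) n q) : ∀ ψ ∈ l, H.Sat V ψ n q := by
  induction l with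
  | nil => simp
  | cons ψ l ih =>
    cases l with
    | nil => simpa [conjList] using h
    | cons χ l =>
      obtain ⟨hψ, hl⟩ := sat_and'.1 (h : H.Sat V (and' ψ (conjList (χ :: l))) n q)
      simpa [hψ] using ih hl

theorem _root_.IsTautInstance.sat {φ : HForm Phi} (hφ : IsTautInstance φ) : H.Sat V φ n q := by
  classical
  simpa using hφ (fun ψ => decide (H.Sat V ψ n q))
    ⟨by simp, fun a b => by simp [imp_iff_not_or]⟩

theorem sat_iff'_self : H.Sat V (iff' a a) n q := by simp

theorem sat_diaS_bot_iff_bot : H.Sat V (iff' (diaS bot) bot) n q := by simp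

theorem sat_diaT_bot_iff_bot : H.Sat V (iff' (diaT bot) bot) n q := by cases n <;> simp

theorem sat_diaS_or_iff : H.Sat V (iff' (diaS (or' a b)) (or' (diaS a) (diaS b))) n q := by
  simp [and_or_left, exists_or]

theorem sat_diaT_or_iff : H.Sat V (iff' (diaT (or' a b)) (or' (diaT a) (diaT b))) n q := by
  cases n <;> simp [exists_or]

theorem sat_tCount {i : ℕ} (hi : 1 ≤ i) {δ : Fin i → HForm Phi}
    (hδ : ∀ j k, j ≠ k → IsTautInstance (neg (and' (δ j) (δ k)))) :
    H.Sat V (imp (conjList (List.ofFn fun j => diaT (δ j))) (iterT i top)) n q := by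
  intro h
  have hdiaT (j : Fin i) : H.Sat V (diaT (δ j)) n q :=
    sat_of_mem_conjList h _ (List.mem_ofFn.2 ⟨j, rfl⟩)
  cases n with
  | zero => exact absurd (hdiaT ⟨0, hi⟩) sat_diaT_zero
  | succ m =>
    choose face hface using fun j => sat_diaT_succ.1 (hdiaT j)
    have hinj : Function.Injective face := fun j k hjk => by
      by_contra hne
      exact sat_neg.1 (hδ j k hne).sat (sat_and'.2 ⟨hface j, hjk ▸ hface k⟩)
    simpa [sat_iterT_top_iff] using Fintype.card_le_of_injective face hinj

theorem sat_ttPerm (hH : H.CubicalLaws) :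
    H.Sat V (imp (iterT 2 top) (imp (diaT (boxT a)) (boxT (diaT a)))) n q := by
  intro h2 hd
  have hn : 2 ≤ n := (sat_iterT_top_iff 2).1 h2
  obtain ⟨m, rfl⟩ : ∃ m, n = m + 2 := ⟨n - 2, by omega⟩
  obtain ⟨i, hi⟩ := sat_diaT_succ.1 hd
  rw [sat_boxT_succ] at hi ⊢
  intro j
  by_cases hji : j = i
  · subst hji
    exact ⟨0, hi 0⟩
  · obtain ⟨k, k', hk⟩ := hH.tgt_tgt.exists_comp_of_ne hH.tgt_tgt hji q
    exact ⟨k', hk ▸ hi k⟩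

theorem sat_stPerm (hH : H.CubicalLaws) : H.Sat V (imp (diaS (boxT a)) (boxT (diaS a))) n q := by
  cases n with
  | zero => simp
  | succ m =>
    rintro ⟨q', i, rfl, hq'⟩
    rw [sat_boxT_succ] at hq' ⊢
    intro j
    obtain ⟨i', hi'⟩ := hH.src_tgt.exists_comp_succAbove hH.tgt_src i j q'
    exact ⟨_, i', hi', hq' _⟩

theorem sat_tsPerm (hH : H.CubicalLaws) : H.Sat V (imp (diaT (boxS a)) (boxS (diaT a))) n q := by
  cases n with
  | zero => simp
  | succ m =>
    rintro ⟨i, hi⟩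
    rw [sat_boxS] at hi ⊢
    rintro q' j rfl
    obtain ⟨j', hj'⟩ := hH.src_tgt.exists_comp_succAbove hH.tgt_src j i q'
    exact ⟨j.succAbove i, hi _ j' hj'⟩

theorem sat_sLevel (i : ℕ) : H.Sat V (imp (diaS (iterT i top)) (boxS (iterT i top))) n q := by
  simp only [sat_imp, sat_diaS, sat_boxS, sat_iterT_top_iff]
  exact fun ⟨_, _, _, hi⟩ _ _ _ => hi

theorem sat_tLevel (i : ℕ) : H.Sat V (imp (diaT (iterT i top)) (boxT (iterT i top))) n q := by
  cases n <;> simp [sat_iterT_top_iff]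

theorem sat_levelUp (i : ℕ) : H.Sat V (imp (iterT i top) (boxS (diaT (iterT i top)))) n q := by
  simp only [sat_imp, sat_boxS, sat_diaT_succ, sat_iterT_top_iff]
  exact fun hi _ _ _ => ⟨0, hi⟩

theorem sat_levelDown (i : ℕ) : H.Sat V (imp (diaS (diaT (iterT i top))) (iterT i top)) n q := by
  simp [sat_iterT_top_iff]

theorem sat_sst (hH : H.CubicalLaws) :
    H.Sat V (imp (diaS (diaS (diaT a))) (diaS (diaT (diaS a)))) n q := by
  rintro ⟨q₁, i₁, rfl, q₂, i₂, rfl, k, hk⟩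
  obtain ⟨β, γ, hβk, hq⟩ : ∃ β γ, β ≠ k ∧
      H.src n γ (H.src (n + 1) β q₂) = H.src n i₁ (H.src (n + 1) i₂ q₂) := by
    by_cases hi₂k : i₂ = k
    · subst hi₂k
      obtain ⟨γ, hγ⟩ := hH.src_src.exists_comp_succAbove hH.src_src i₂ i₁ q₂
      exact ⟨_, γ, Fin.succAbove_ne _ _, hγ⟩
    · exact ⟨i₂, i₁, hi₂k, rfl⟩
  obtain ⟨κ', κ, hκ⟩ := hH.src_tgt.exists_comp_of_ne hH.tgt_src hβk q₂
  exact ⟨_, γ, hq, κ, _, κ', hκ, hk⟩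

theorem sat_stt (hH : H.CubicalLaws) :
    H.Sat V (imp (diaS (diaT (diaT a))) (diaT (diaS (diaT a)))) n q := by
  cases n with
  | zero => simp
  | succ m =>
    rintro ⟨q₁, i, rfl, j, k, hk⟩
    obtain ⟨j', k', hj'i, hk'⟩ : ∃ j' k', j' ≠ i ∧
        H.tgt m k' (H.tgt (m + 1) j' q₁) = H.tgt m k (H.tgt (m + 1) j q₁) := by
      by_cases hji : j = i
      · subst hji
        obtain ⟨k', hk'⟩ := hH.tgt_tgt.exists_comp_succAbove hH.tgt_tgt j k q₁
        exact ⟨_, k', Fin.succAbove_ne _ _, hk'⟩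
      · exact ⟨j, k, hji, rfl⟩
    obtain ⟨ι, κ, hικ⟩ := hH.src_tgt.exists_comp_of_ne hH.tgt_src (Ne.symm hj'i) q₁
    exact ⟨κ, _, ι, hικ, k', hk' ▸ hk⟩

theorem sat_diaS_imp_diaS (h : ∀ n (q : H.cell n), H.Sat V (imp a b) n q) :
    H.Sat V (imp (diaS a) (diaS b)) n q := by
  rintro ⟨q', i, hq', ha⟩
  exact ⟨q', i, hq', h _ _ ha⟩

theorem sat_diaT_imp_diaT (h : ∀ n (q : H.cell n), H.Sat V (imp a b) n q) :
    H.Sat V (imp (diaT a) (diaT b)) n q := by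
  cases n with
  | zero => simp
  | succ m =>
    rintro ⟨i, ha⟩
    exact ⟨i, h _ _ ha⟩

theorem sat_subst (σ : Phi → HForm Phi) (φ : HForm Phi) :
    H.Sat V (φ.subst σ) n q ↔ H.Sat (fun n q => {p | H.Sat V (σ p) n q}) φ n q := by
  induction φ generalizing n with
  | atom p => rfl
  | bot => rfl
  | imp a b iha ihb => simp only [HForm.subst, sat_imp, iha, ihb]
  | diaS a ih => simp only [HForm.subst, sat_diaS, ih]
  | diaT a ih =>
    cases n with
    | zero => simp [HForm.subst]
    | succ m => simp only [HForm.subst, sat_diaT_succ, ih]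

end PreCubical

open PreCubical

/-- Soundness: every formula derivable in the HDML axiomatic system is valid,
i.e. holds at every cell of every HDML model. -/
theorem soundness {Phi : Type} (φ : HForm Phi) (h : Deriv φ) :
    ∀ (M : HDMLModel Phi) (n : ℕ) (q : M.pre.cell n), M.Sat φ n q := by
  induction h with
  | taut hφ => exact fun M n q => hφ.sat
  | diaS_bot => exact fun M n q => sat_diaS_bot_iff_bot
  | diaT_bot => exact fun M n q => sat_diaT_bot_iff_bot
  | diaS_or => exact fun M n q => sat_diaS_or_iff
  | diaT_or => exact fun M n q => sat_diaT_or_iff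
  | boxS_def | boxT_def => exact fun M n q => sat_iff'_self
  | t_count _ hi _ _ hδ => exact fun M n q => sat_tCount hi hδ
  | tt_perm => exact fun M n q => sat_ttPerm M.laws
  | st_perm => exact fun M n q => sat_stPerm M.laws
  | ts_perm => exact fun M n q => sat_tsPerm M.laws
  | s_level i => exact fun M n q => sat_sLevel i
  | t_level i => exact fun M n q => sat_tLevel i
  | level_up i => exact fun M n q => sat_levelUp i
  | level_down i => exact fun M n q => sat_levelDown i
  | sst => exact fun M n q => sat_sst M.laws
  | stt => exact fun M n q => sat_stt M.laws
  | mp _ _ ih₁ ih₂ => exact fun M n q => ih₂ M n q (ih₁ M n q)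
  | monoS _ ih => exact fun M n q => sat_diaS_imp_diaS (ih M)
  | monoT _ ih => exact fun M n q => sat_diaT_imp_diaT (ih M)
  | usubst σ _ ih =>
    exact fun M n q => (sat_subst σ _).2 (ih ⟨M.pre, M.laws, fun n q => {p | M.Sat (σ p) n q}⟩ n q)
end

section
/- Compactness fails for HDML: every finite subset of the infinite set Γ = {⟨t⟩^i⊤ | i ∈ ℕ} is satisfiable (there exist a model and a cell satisfying all its formulas), yet there is no HDML model M and cell q such that M,q ⊨ ψ for every ψ ∈ Γ. -/
/-- The one-cell-per-dimension model. -/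
def unitModel (Phi : Type) : HDMLModel Phi where
  pre := ⟨fun _ => Unit, fun _ _ _ => (), fun _ _ _ => ()⟩
  laws := ⟨fun _ _ _ _ _ => rfl, fun _ _ _ _ _ => rfl, fun _ _ _ _ _ => rfl,
          fun _ _ _ _ _ => rfl⟩
  val := fun _ _ => ∅

lemma unit_sat (Phi : Type) : ∀ (i n : ℕ), i ≤ n →
    (unitModel Phi).Sat (HForm.iterT i HForm.top) n () := by
  intro i
  induction i with
  | zero => intro n _; exact fun h => h
  | succ i ih =>
    intro n hn
    match n, hn with
    | m + 1, hn =>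
      exact ⟨0, ih m (Nat.succ_le_succ_iff.mp hn)⟩

lemma sat_dim {Phi : Type} (M : HDMLModel Phi) : ∀ (i n : ℕ) (q : M.pre.cell n),
    M.Sat (HForm.iterT i HForm.top) n q → i ≤ n := by
  intro i
  induction i with
  | zero => intro n q _; exact Nat.zero_le n
  | succ i ih =>
    intro n q h
    match n, q, h with
    | 0, q, h => exact absurd h id
    | m + 1, q, ⟨j, hj⟩ => exact Nat.succ_le_succ (ih m _ hj)

lemma size_iterT {Phi : Type} (i : ℕ) : i ≤ (HForm.iterT i (HForm.top : HForm Phi)).size := by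
  induction i with
  | zero => exact Nat.zero_le _
  | succ i ih => exact Nat.succ_le_succ ih
/-- Compactness failure: every finite subset of `Γ = {⟨t⟩^i⊤ | i ∈ ℕ}` is
satisfiable, yet no model and cell satisfy all of `Γ`. -/
theorem compactness_failure (Phi : Type) :
    (∀ Γ₀ : Finset (HForm Phi), (∀ ψ ∈ Γ₀, ∃ i : ℕ, ψ = HForm.iterT i HForm.top) →
      ∃ (M : HDMLModel Phi) (n : ℕ) (q : M.pre.cell n), ∀ ψ ∈ Γ₀, M.Sat ψ n q) ∧
    ¬ ∃ (M : HDMLModel Phi) (n : ℕ) (q : M.pre.cell n),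
        ∀ i : ℕ, M.Sat (HForm.iterT i HForm.top) n q := by
  constructor
  · intro Γ₀ hΓ
    refine ⟨unitModel Phi, Γ₀.sup HForm.size, (), ?_⟩
    intro ψ hψ
    obtain ⟨i, rfl⟩ := hΓ ψ hψ
    exact unit_sat Phi i _ (le_trans (size_iterT i) (Finset.le_sup hψ))
  · rintro ⟨M, n, q, h⟩
    exact absurd (sat_dim M (n+1) n q (h (n+1))) (by omega)
end

section
/- Axiomatization of Kripke HDAs: a cubical set H validates the formula [s][s]⊥ (i.e. for every valuation V and every cell q of H, (H,V),q ⊨ [s][s]⊥) if and only if Q_n = ∅ for all n > 1. -/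
/-- Axiomatization of Kripke HDAs: a cubical set validates `[s][s]⊥` (under
every valuation, at every cell) iff all its levels `Q_n`, for `n > 1`, are empty. -/
theorem kripke_axiomatization (Phi : Type) (H : PreCubical) (laws : H.CubicalLaws) :
    (∀ (V : ∀ n : ℕ, H.cell n → Set Phi) (n : ℕ) (q : H.cell n),
        H.Sat V (HForm.boxS (HForm.boxS HForm.bot)) n q) ↔
    (∀ n : ℕ, 1 < n → IsEmpty (H.cell n)) := by
  constructor
  · intro h n hn
    constructor
    intro q
    match n, hn, q with
    | m + 2, _, q =>
      have := h (fun _ _ => (∅ : Set Phi)) m (H.src m 0 (H.src (m + 1) 0 q))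
      simp only [HForm.boxS, HForm.neg, PreCubical.Sat] at this
      exact this ⟨H.src (m + 1) 0 q, 0, rfl, fun h2 => h2 ⟨q, 0, rfl, fun h3 => h3⟩⟩
  · intro h V n q
    simp only [HForm.boxS, HForm.neg, PreCubical.Sat]
    rintro ⟨q', i, rfl, hq'⟩
    exact hq' fun ⟨q'', _, _, _⟩ => (h (n + 2) (by omega)).false q''
end

section
/- Encoding of standard modal logic: let M be an HDML model whose underlying cubical set satisfies Q_n = ∅ for all n > 1, and define the relation R ⊆ Q_0 × Q_0 by q R q' iff there exists e ∈ Q_1 with s_1(e) = q and t_1(e) = q'. Then for every formula φ of the fragment built from atomic propositions, ⊥, →, and the defined modality ◇ψ := ⟨s⟩⟨t⟩ψ, and for every state q ∈ Q_0: M,q ⊨ φ under the HDML semantics if and only if φ holds at q in the Kripke model (Q_0, R, V restricted to Q_0) under the standard Kripke semantics (where ◇ψ holds at q iff ψ holds at some q' with q R q'). -/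
/-- Standard modal formulas: atoms, `⊥`, `→`, and the diamond `◇`. -/
inductive MForm (Phi : Type) : Type
  | atom : Phi → MForm Phi
  | bot  : MForm Phi
  | imp  : MForm Phi → MForm Phi → MForm Phi
  | dia  : MForm Phi → MForm Phi

/-- The encoding `◇ψ := ⟨s⟩⟨t⟩ψ` into HDML. -/
def MForm.toHForm {Phi : Type} : MForm Phi → HForm Phi
  | .atom p => .atom p
  | .bot => .bot
  | .imp a b => .imp a.toHForm b.toHForm
  | .dia a => .diaS (.diaT a.toHForm)

/-- Standard Kripke semantics. -/
def KSat {Phi W : Type} (R : W → W → Prop) (V : W → Set Phi) : MForm Phi → W → Prop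
  | .atom p, w => p ∈ V w
  | .bot, _ => False
  | .imp a b, w => KSat R V a w → KSat R V b w
  | .dia a, w => ∃ w', R w w' ∧ KSat R V a w'

/-- Encoding of standard modal logic: over an HDML model with `Q_n = ∅` for
`n > 1`, the fragment built from atoms, `⊥`, `→` and `◇ψ := ⟨s⟩⟨t⟩ψ`, interpreted at states
`q ∈ Q_0`, coincides with the standard Kripke semantics over the relation
`q R q' ↔ ∃ e ∈ Q_1, s_1(e) = q ∧ t_1(e) = q'`. -/
theorem standard_modal_logic_encoding {Phi : Type} (M : HDMLModel Phi)
    (hK : ∀ n : ℕ, 1 < n → IsEmpty (M.pre.cell n)) :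
    ∀ (φ : MForm Phi) (q : M.pre.cell 0),
      M.Sat φ.toHForm 0 q ↔
      KSat (fun q q' : M.pre.cell 0 =>
          ∃ e : M.pre.cell 1, M.pre.src 0 0 e = q ∧ M.pre.tgt 0 0 e = q')
        (fun q => M.val 0 q) φ q := by
  intro φ
  induction φ with
  | atom p => intro q; rfl
  | bot => intro q; rfl
  | imp a b iha ihb =>
      intro q
      simp only [MForm.toHForm, HDMLModel.Sat, PreCubical.Sat, KSat]
      exact imp_congr (iha q) (ihb q)
  | dia a ih =>
      intro q
      constructor
      · rintro ⟨e, i, hs, j, hT⟩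
        fin_cases i; fin_cases j
        exact ⟨_, ⟨e, hs, rfl⟩, (ih _).mp hT⟩
      · rintro ⟨w', ⟨e, hs, ht⟩, hw⟩
        exact ⟨e, 0, hs, 0, ht ▸ (ih w').mpr hw⟩
end

section
/- Encoding of the CTL existential Until: let M be an HDML model whose underlying cubical set satisfies Q_n = ∅ for all n > 1. For every state q_0 ∈ Q_0 and formulas φ, φ': M,q_0 ⊨ (φ ∨ ⟨t⟩⊤) U_C (φ' ∧ ¬⟨t⟩⊤) if and only if there exists a finite sequence of states u_1, …, u_k ∈ Q_0 with u_1 = q_0 such that M,u_k ⊨ φ', M,u_i ⊨ φ for all 1 ≤ i < k, and for each 1 < i ≤ k there exists e ∈ Q_1 with s_1(e) = u_{i-1} and t_1(e) = u_i. -/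
/-- A simple step in a cubical set: either going up along a source map or down along a
target map. -/
inductive Step (H : PreCubical) : (Σ n : ℕ, H.cell n) → (Σ n : ℕ, H.cell n) → Prop
  | up {n : ℕ} (i : Fin (n + 1)) (q : H.cell (n + 1)) : Step H ⟨n, H.src n i q⟩ ⟨n + 1, q⟩
  | down {n : ℕ} (i : Fin (n + 1)) (q : H.cell (n + 1)) : Step H ⟨n + 1, q⟩ ⟨n, H.tgt n i q⟩

/-- The CTL-like Until `φ U_C φ'`: there is a path `π` from `q` to some `q'` such that `φ'`
holds at `q'` and `φ` holds at every cell of `π` different from `q'`. -/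
def SatUntilC {Phi : Type} (M : HDMLModel Phi) (φ φ' : HForm Phi) {n : ℕ}
    (q : M.pre.cell n) : Prop :=
  ∃ l : List (Σ m : ℕ, M.pre.cell m),
    List.Chain (Step M.pre) ⟨n, q⟩ l ∧
    M.Sat φ' ((⟨n, q⟩ :: l).getLast (List.cons_ne_nil _ _)).1
      ((⟨n, q⟩ :: l).getLast (List.cons_ne_nil _ _)).2 ∧
    ∀ z ∈ (⟨n, q⟩ :: l : List (Σ m : ℕ, M.pre.cell m)),
      z ≠ (⟨n, q⟩ :: l).getLast (List.cons_ne_nil _ _) → M.Sat φ z.1 z.2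

/-!
A path from a state can only alternate between states and transitions: from a `0`-cell the only
simple step goes up to a transition it is the source of, and, as there are no `2`-cells, from a
transition the only step goes down to its target. Along such a path `φ ∨ ⟨t⟩⊤` holds at every
transition and reduces to `φ` at states, while `φ' ∧ ¬⟨t⟩⊤` never holds at a transition and
reduces to `φ'` at states. So `U_C` restricted to states is the CTL existential until along
transitions, and both sides of the theorem are the unfoldings of that inductive notion.
-/

/-- The CTL existential until `E[P U Q]` along a relation `R`. -/
inductive EUntil {α : Type*} (R : α → α → Prop) (P Q : α → Prop) : α → Prop
  | base {a : α} : Q a → EUntil R P Q a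
  | step {a b : α} : P a → R a b → EUntil R P Q b → EUntil R P Q a

namespace EUntil

variable {α : Type*} {R : α → α → Prop} {P Q : α → Prop}

theorem iff_exists_isChain {a : α} :
    EUntil R P Q a ↔ ∃ l : List α, (a :: l).IsChain R ∧
      Q ((a :: l).getLast (List.cons_ne_nil _ _)) ∧
      ∀ z ∈ a :: l, z ≠ (a :: l).getLast (List.cons_ne_nil _ _) → P z := by
  constructor
  · intro h
    induction h with
    | base hQ =>
      exact ⟨[], .singleton _, hQ, fun z hz hne => absurd (List.mem_singleton.1 hz) hne⟩
    | @step a b hP hR _ ih =>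
      obtain ⟨l, hchain, hQ, hP'⟩ := ih
      refine ⟨b :: l, .cons_cons hR hchain, hQ, fun z hz hne => ?_⟩
      rw [List.getLast_cons (List.cons_ne_nil _ _)] at hne
      rcases List.mem_cons.1 hz with rfl | hz
      exacts [hP, hP' z hz hne]
  · rintro ⟨l, hchain, hQ, hP⟩
    induction l generalizing a with
    | nil => exact base hQ
    | cons b l ih =>
      by_cases hlast : a = (a :: b :: l).getLast (List.cons_ne_nil _ _)
      · exact base (hlast ▸ hQ)
      rw [List.getLast_cons (List.cons_ne_nil _ _)] at hQ hlast hP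
      obtain ⟨hR, hchain⟩ := List.isChain_cons_cons.1 hchain
      exact step (hP a List.mem_cons_self hlast) hR
        (ih hchain hQ fun z hz hne => hP z (List.mem_cons_of_mem _ hz) hne)

theorem iff_exists_fin {a : α} :
    EUntil R P Q a ↔ ∃ (k : ℕ) (u : Fin (k + 1) → α), u 0 = a ∧ Q (u (Fin.last k)) ∧
      (∀ i : Fin (k + 1), i ≠ Fin.last k → P (u i)) ∧
      ∀ i : Fin k, R (u i.castSucc) (u i.succ) := by
  constructor
  · intro h
    induction h with
    | @base a hQ => exact ⟨0, fun _ => a, rfl, hQ, fun i hi => absurd (Fin.fin_one_eq_zero i) hi,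
        Fin.elim0⟩
    | @step a b hP hR _ ih =>
      obtain ⟨k, u, rfl, hQ, hP', hR'⟩ := ih
      refine ⟨k + 1, Fin.cons a u, rfl, by simpa [← Fin.succ_last] using hQ, ?_, ?_⟩
      · intro i hi
        cases i using Fin.cases with
        | zero => exact hP
        | succ j => exact hP' j fun h => hi (by rw [h, Fin.succ_last])
      · intro i
        cases i using Fin.cases with
        | zero => exact hR
        | succ j => simpa [← Fin.succ_castSucc] using hR' j
  · rintro ⟨k, u, rfl, hQ, hP, hR⟩
    induction k with
    | zero => exact base hQ
    | succ k ih =>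
      refine step (hP 0 Fin.last_pos.ne) (hR 0) (ih (Fin.tail u) ?_ ?_ ?_)
      · simpa [Fin.tail, Fin.succ_last] using hQ
      · exact fun i hi => hP i.succ fun h =>
          hi (Fin.succ_injective _ (h.trans (Fin.succ_last k).symm))
      · intro i
        simpa [Fin.tail, ← Fin.succ_castSucc] using hR i.succ

end EUntil

namespace PreCubical

variable (H : PreCubical)

def Transition (q r : H.cell 0) : Prop :=
  ∃ e : H.cell 1, H.src 0 0 e = q ∧ H.tgt 0 0 e = r

theorem step_from_zero {q : H.cell 0} {z : Σ n, H.cell n} (h : Step H ⟨0, q⟩ z) :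
    ∃ e : H.cell 1, z = ⟨1, e⟩ ∧ H.src 0 0 e = q := by
  cases h with
  | up i e => exact ⟨e, rfl, by rw [Fin.fin_one_eq_zero i]⟩

theorem step_from_one [IsEmpty (H.cell 2)] {e : H.cell 1} {z : Σ n, H.cell n}
    (h : Step H ⟨1, e⟩ z) : z = ⟨0, H.tgt 0 0 e⟩ := by
  cases h with
  | up _ c => exact isEmptyElim c
  | down i _ => rw [Fin.fin_one_eq_zero i]

end PreCubical

namespace HDMLModel

open HForm

variable {Phi : Type} (M : HDMLModel Phi) (φ φ' : HForm Phi)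

theorem sat_or_diaT_top_zero (q : M.pre.cell 0) :
    M.Sat (or' φ (diaT top)) 0 q ↔ M.Sat φ 0 q := by
  simp [HDMLModel.Sat, PreCubical.Sat, or', neg]

theorem sat_or_diaT_top_succ {n : ℕ} (q : M.pre.cell (n + 1)) :
    M.Sat (or' φ (diaT top)) (n + 1) q :=
  fun _ => ⟨0, id⟩

theorem sat_and_not_diaT_top_zero (q : M.pre.cell 0) :
    M.Sat (and' φ (neg (diaT top))) 0 q ↔ M.Sat φ 0 q := by
  simp [HDMLModel.Sat, PreCubical.Sat, and', neg]

theorem not_sat_and_not_diaT_top_succ {n : ℕ} (q : M.pre.cell (n + 1)) :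
    ¬ M.Sat (and' φ (neg (diaT top))) (n + 1) q := by
  simp [HDMLModel.Sat, PreCubical.Sat, and', neg, top]

theorem satUntilC_iff_eUntil_step {n : ℕ} (q : M.pre.cell n) :
    SatUntilC M φ φ' q ↔
      EUntil (Step M.pre) (fun z => M.Sat φ z.1 z.2) (fun z => M.Sat φ' z.1 z.2) ⟨n, q⟩ := by
  rw [EUntil.iff_exists_isChain]
  rfl

theorem eUntil_transition_of_eUntil_step [IsEmpty (M.pre.cell 2)] {z : Σ n, M.pre.cell n}
    (h : EUntil (Step M.pre) (fun z => M.Sat (or' φ (diaT top)) z.1 z.2)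
      (fun z => M.Sat (and' φ' (neg (diaT top))) z.1 z.2) z) :
    (∀ q, z = ⟨0, q⟩ → EUntil M.pre.Transition (M.Sat φ 0) (M.Sat φ' 0) q) ∧
    ∀ e, z = ⟨1, e⟩ →
      EUntil M.pre.Transition (M.Sat φ 0) (M.Sat φ' 0) (M.pre.tgt 0 0 e) := by
  induction h with
  | base hQ =>
    refine ⟨?_, ?_⟩
    · rintro q rfl
      exact .base ((M.sat_and_not_diaT_top_zero φ' q).1 hQ)
    · rintro e rfl
      exact absurd hQ (M.not_sat_and_not_diaT_top_succ φ' e)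
  | step hP hR _ ih =>
    refine ⟨?_, ?_⟩
    · rintro q rfl
      obtain ⟨e, rfl, hsrc⟩ := M.pre.step_from_zero hR
      exact .step ((M.sat_or_diaT_top_zero φ q).1 hP) ⟨e, hsrc, rfl⟩ (ih.2 e rfl)
    · rintro e rfl
      obtain rfl := M.pre.step_from_one hR
      exact ih.1 _ rfl

theorem eUntil_step_of_eUntil_transition {q : M.pre.cell 0}
    (h : EUntil M.pre.Transition (M.Sat φ 0) (M.Sat φ' 0) q) :
    EUntil (Step M.pre) (fun z => M.Sat (or' φ (diaT top)) z.1 z.2)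
      (fun z => M.Sat (and' φ' (neg (diaT top))) z.1 z.2) ⟨0, q⟩ := by
  induction h with
  | base hQ => exact .base ((M.sat_and_not_diaT_top_zero φ' _).2 hQ)
  | step hP hR _ ih =>
    obtain ⟨e, rfl, rfl⟩ := hR
    exact .step ((M.sat_or_diaT_top_zero φ _).2 hP) (.up 0 e)
      (.step (M.sat_or_diaT_top_succ φ e) (.down 0 e) ih)

end HDMLModel

/-- Encoding of the CTL existential Until: over an HDML model with `Q_n = ∅`
for `n > 1`, and a state `q₀ ∈ Q_0`:
`M,q₀ ⊨ (φ ∨ ⟨t⟩⊤) U_C (φ' ∧ ¬⟨t⟩⊤)` iff there is a finite sequence of states starting at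
`q₀`, ending in a state satisfying `φ'`, all earlier states satisfying `φ`, and consecutive
states linked by a transition `e ∈ Q_1` with `s_1(e)` the earlier and `t_1(e)` the later. -/
theorem ctl_until_encoding {Phi : Type} (M : HDMLModel Phi)
    (hK : ∀ n : ℕ, 1 < n → IsEmpty (M.pre.cell n)) (q0 : M.pre.cell 0)
    (φ φ' : HForm Phi) :
    SatUntilC M (HForm.or' φ (HForm.diaT HForm.top))
        (HForm.and' φ' (HForm.neg (HForm.diaT HForm.top))) q0 ↔
    ∃ (k : ℕ) (u : Fin (k + 1) → M.pre.cell 0),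
      u 0 = q0 ∧
      M.Sat φ' 0 (u (Fin.last k)) ∧
      (∀ i : Fin (k + 1), i ≠ Fin.last k → M.Sat φ 0 (u i)) ∧
      ∀ i : Fin k, ∃ e : M.pre.cell 1,
        M.pre.src 0 0 e = u i.castSucc ∧ M.pre.tgt 0 0 e = u i.succ := by
  have := hK 2 one_lt_two
  calc SatUntilC M _ _ q0
    _ ↔ _ := M.satUntilC_iff_eUntil_step _ _ q0
    _ ↔ EUntil M.pre.Transition (M.Sat φ 0) (M.Sat φ' 0) q0 :=
      ⟨fun h => (M.eUntil_transition_of_eUntil_step φ φ' h).1 q0 rfl,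
        M.eUntil_step_of_eUntil_transition φ φ'⟩
    _ ↔ _ := EUntil.iff_exists_fin
end

section
/- A finitary event structure is uniquely determined by its family of configurations: for all events e, e' ∈ E, (i) e # e' if and only if no configuration C ∈ C_E contains both e and e'; and (ii) e ≤ e' if and only if every configuration C ∈ C_E with e' ∈ C also satisfies e ∈ C. -/
/-- A configuration of an event structure `(E, ≤, #)`: a finite, history-closed and
conflict-free set of events. -/
def IsConfig {E : Type} [PartialOrder E] (conflict : E → E → Prop) (C : Set E) : Prop :=
  C.Finite ∧ (∀ e ∈ C, ∀ e' : E, e' ≤ e → e' ∈ C) ∧ ∀ e ∈ C, ∀ e' ∈ C, ¬ conflict e e'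

/-- a finitary event structure is uniquely determined by its family of
configurations: (i) `e # e'` iff no configuration contains both `e` and `e'`; and
(ii) `e ≤ e'` iff every configuration containing `e'` also contains `e`. -/
theorem event_structure_determined_by_configurations {E : Type} [PartialOrder E]
    (conflict : E → E → Prop)
    (hirr : ∀ e : E, ¬ conflict e e)
    (hsymm : ∀ e e' : E, conflict e e' → conflict e' e)
    (hinherit : ∀ e e' e'' : E, conflict e e' → e' ≤ e'' → conflict e e'')
    (hfin : ∀ e : E, {e' : E | e' ≤ e}.Finite) :
    (∀ e e' : E, conflict e e' ↔
        ¬ ∃ C : Set E, IsConfig conflict C ∧ e ∈ C ∧ e' ∈ C) ∧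
    (∀ e e' : E, e ≤ e' ↔
        ∀ C : Set E, IsConfig conflict C → e' ∈ C → e ∈ C) := by
  constructor
  · intro e e'
    constructor
    · rintro hc ⟨C, ⟨_, _, hcf⟩, he, he'⟩
      exact hcf e he e' he' hc
    · intro hne
      by_contra hc
      apply hne
      refine ⟨{x | x ≤ e} ∪ {x | x ≤ e'}, ⟨(hfin e).union (hfin e'), ?_, ?_⟩,
        Or.inl le_rfl, Or.inr le_rfl⟩
      · rintro a (ha | ha) b hb
        · exact Or.inl (hb.trans ha)
        · exact Or.inr (hb.trans ha)
      · rintro a (ha | ha) b (hb | hb) hab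
        · exact hirr e (hinherit e a e (hsymm a e (hinherit a b e hab hb)) ha)
        · exact hc (hsymm e' e (hinherit e' a e (hsymm a e' (hinherit a b e' hab hb)) ha))
        · exact hc (hinherit e a e' (hsymm a e (hinherit a b e hab hb)) ha)
        · exact hirr e' (hinherit e' a e' (hsymm a e' (hinherit a b e' hab hb)) ha)
  · intro e e'
    constructor
    · intro hle C hC he'
      exact hC.2.1 e' he' e hle
    · intro h
      have : e ∈ {x | x ≤ e'} := by
        apply h
        · refine ⟨hfin e', fun a ha b hb => hb.trans ha, ?_⟩
          intro a ha b hb hab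
          exact hirr e' (hinherit e' a e' (hsymm a e' (hinherit a b e' hab hb)) ha)
        · exact le_rfl
      exact this
end

section
/- Split-bisimilarity implies HDML modal equivalence: if two pointed labeled HDAs (H_A, q_A⁰) and (H_B, q_B⁰) are split-bisimilar, then they are modally equivalent, i.e. for every formula φ of labeled HDML (built from ⊥, →, ⟨s a⟩, ⟨t a⟩ with a ∈ Σ), H_A,q_A⁰ ⊨ φ if and only if H_B,q_B⁰ ⊨ φ. -/
/-- A labeled HDA over an alphabet `S`: a cubical set with a multiset labeling of every
cell by the labels of its concurrently executing events; each source/target step removes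
exactly one label. -/
structure LHDA (S : Type) : Type 1 where
  pre : PreCubical
  laws : pre.CubicalLaws
  lab : ∀ n : ℕ, pre.cell n → Multiset S
  lab_card : ∀ (n : ℕ) (q : pre.cell n), Multiset.card (lab n q) = n
  lab_src : ∀ (n : ℕ) (i : Fin (n + 1)) (q : pre.cell (n + 1)),
      ∃ a : S, lab (n + 1) q = a ::ₘ lab n (pre.src n i q)
  lab_tgt : ∀ (n : ℕ) (i : Fin (n + 1)) (q : pre.cell (n + 1)),
      ∃ a : S, lab (n + 1) q = a ::ₘ lab n (pre.tgt n i q)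

/-- Labeled HDML formulas (over frames): `⊥`, `→`, `⟨s a⟩`, `⟨t a⟩`. -/
inductive LForm (S : Type) : Type
  | bot  : LForm S
  | imp  : LForm S → LForm S → LForm S
  | diaS : S → LForm S → LForm S
  | diaT : S → LForm S → LForm S

/-- Satisfaction of labeled HDML formulas in a labeled HDA. -/
def LSat {S : Type} (H : LHDA S) : LForm S → ∀ n : ℕ, H.pre.cell n → Prop
  | .bot, _, _ => False
  | .imp a b, n, q => LSat H a n q → LSat H b n q
  | .diaS a ψ, n, q => ∃ (q' : H.pre.cell (n + 1)) (i : Fin (n + 1)),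
      H.pre.src n i q' = q ∧ H.lab (n + 1) q' = a ::ₘ H.lab n q ∧ LSat H ψ (n + 1) q'
  | .diaT _ _, 0, _ => False
  | .diaT a ψ, m + 1, q => ∃ i : Fin (m + 1),
      H.lab (m + 1) q = a ::ₘ H.lab m (H.pre.tgt m i q) ∧ LSat H ψ m (H.pre.tgt m i q)

/-- Paths in a labeled HDA starting at the cell `x`, ending at the indexed cell. -/
inductive LPath {S : Type} (H : LHDA S) (x : Σ n : ℕ, H.pre.cell n) :
    (Σ n : ℕ, H.pre.cell n) → Type
  | nil : LPath H x x
  | up {n : ℕ} {q : H.pre.cell n} (p : LPath H x ⟨n, q⟩) (i : Fin (n + 1))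
      (q' : H.pre.cell (n + 1)) (h : H.pre.src n i q' = q) : LPath H x ⟨n + 1, q'⟩
  | down {n : ℕ} {q : H.pre.cell (n + 1)} (p : LPath H x ⟨n + 1, q⟩) (i : Fin (n + 1)) :
      LPath H x ⟨n, H.pre.tgt n i q⟩

/-- `HasTrace p tr`: the split-trace of the path `p` is `tr`, where `(a, true)` records the
start (`a⁺`) and `(a, false)` the termination (`a⁻`) of an `a`-labeled event. -/
inductive HasTrace {S : Type} {H : LHDA S} {x : Σ n : ℕ, H.pre.cell n} :
    ∀ {y : Σ n : ℕ, H.pre.cell n}, LPath H x y → List (S × Bool) → Prop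
  | nil : HasTrace LPath.nil []
  | up {n : ℕ} {q : H.pre.cell n} {p : LPath H x ⟨n, q⟩} {tr : List (S × Bool)}
      (htr : HasTrace p tr) (i : Fin (n + 1)) (q' : H.pre.cell (n + 1))
      (h : H.pre.src n i q' = q) (a : S) (ha : H.lab (n + 1) q' = a ::ₘ H.lab n q) :
      HasTrace (LPath.up p i q' h) (tr ++ [(a, true)])
  | down {n : ℕ} {q : H.pre.cell (n + 1)} {p : LPath H x ⟨n + 1, q⟩} {tr : List (S × Bool)}
      (htr : HasTrace p tr) (i : Fin (n + 1)) (a : S)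
      (ha : H.lab (n + 1) q = a ::ₘ H.lab n (H.pre.tgt n i q)) :
      HasTrace (LPath.down p i) (tr ++ [(a, false)])

/-- `PExt p p'`: the path `p'` extends the path `p`. -/
inductive PExt {S : Type} {H : LHDA S} {x : Σ n : ℕ, H.pre.cell n} :
    ∀ {y z : Σ n : ℕ, H.pre.cell n}, LPath H x y → LPath H x z → Prop
  | refl {y : Σ n : ℕ, H.pre.cell n} (p : LPath H x y) : PExt p p
  | up {y : Σ n : ℕ, H.pre.cell n} {n : ℕ} {q : H.pre.cell n} {p : LPath H x y}
      {p' : LPath H x ⟨n, q⟩} (h : PExt p p') (i : Fin (n + 1)) (q' : H.pre.cell (n + 1))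
      (hs : H.pre.src n i q' = q) : PExt p (LPath.up p' i q' hs)
  | down {y : Σ n : ℕ, H.pre.cell n} {n : ℕ} {q : H.pre.cell (n + 1)} {p : LPath H x y}
      {p' : LPath H x ⟨n + 1, q⟩} (h : PExt p p') (i : Fin (n + 1)) :
      PExt p (LPath.down p' i)

/-- Split-bisimilarity of two pointed labeled HDAs. -/
def SplitBisim {S : Type} (A : LHDA S) (xA : Σ n : ℕ, A.pre.cell n)
    (B : LHDA S) (xB : Σ n : ℕ, B.pre.cell n) : Prop :=
  ∃ R : (Σ y : Σ n : ℕ, A.pre.cell n, LPath A xA y) →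
        (Σ y : Σ n : ℕ, B.pre.cell n, LPath B xB y) → Prop,
    R ⟨xA, LPath.nil⟩ ⟨xB, LPath.nil⟩ ∧
    (∀ pA pB, R pA pB → ∀ trA trB, HasTrace pA.2 trA → HasTrace pB.2 trB → trA = trB) ∧
    (∀ pA pB, R pA pB → ∀ pA' : Σ y : Σ n : ℕ, A.pre.cell n, LPath A xA y,
        PExt pA.2 pA'.2 → ∃ pB' : Σ y : Σ n : ℕ, B.pre.cell n, LPath B xB y,
          PExt pB.2 pB'.2 ∧ R pA' pB') ∧
    (∀ pA pB, R pA pB → ∀ pB' : Σ y : Σ n : ℕ, B.pre.cell n, LPath B xB y,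
        PExt pB.2 pB'.2 → ∃ pA' : Σ y : Σ n : ℕ, A.pre.cell n, LPath A xA y,
          PExt pA.2 pA'.2 ∧ R pA' pB')

namespace SplitBisimAux

variable {S : Type} {H : LHDA S} {x : Σ n : ℕ, H.pre.cell n}

/-- Length (number of steps) of a path. -/
def plen : ∀ {y : Σ n : ℕ, H.pre.cell n}, LPath H x y → ℕ
  | _, .nil => 0
  | _, .up p _ _ _ => plen p + 1
  | _, .down p _ => plen p + 1

/-- The split-trace of a path, computed via choice. -/
noncomputable def traceOf : ∀ {y : Σ n : ℕ, H.pre.cell n}, LPath H x y → List (S × Bool)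
  | _, .nil => []
  | _, @LPath.up _ _ _ n _ p i q' _ =>
      traceOf p ++ [(Classical.choose (H.lab_src n i q'), true)]
  | _, @LPath.down _ _ _ n q p i =>
      traceOf p ++ [(Classical.choose (H.lab_tgt n i q), false)]

lemma traceOf_spec : ∀ {y : Σ n : ℕ, H.pre.cell n} (p : LPath H x y),
    HasTrace p (traceOf p)
  | _, .nil => .nil
  | _, @LPath.up _ _ _ n _ p i q' h =>
      .up (traceOf_spec p) i q' h _
        ((Classical.choose_spec (H.lab_src n i q')).trans
          (congrArg (Classical.choose (H.lab_src n i q') ::ₘ ·) (congrArg (H.lab n) h)))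
  | _, @LPath.down _ _ _ n q p i =>
      .down (traceOf_spec p) i _ (Classical.choose_spec (H.lab_tgt n i q))

lemma trace_exists {y : Σ n : ℕ, H.pre.cell n} (p : LPath H x y) :
    ∃ tr, HasTrace p tr := ⟨traceOf p, traceOf_spec p⟩

lemma trace_len {y : Σ n : ℕ, H.pre.cell n} {p : LPath H x y} {tr : List (S × Bool)}
    (h : HasTrace p tr) : tr.length = plen p := by
  induction h <;> simp [plen, *]

lemma cons_inj {a b : S} {s : Multiset S} (h : a ::ₘ s = b ::ₘ s) : a = b := by
  classical
  by_contra hne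
  have h' := congrArg (Multiset.count b) h
  simp [Multiset.count_cons, hne, Ne.symm hne] at h'

lemma hasTrace_eq {y : Σ n : ℕ, H.pre.cell n} {p : LPath H x y} {tr : List (S × Bool)}
    (h : HasTrace p tr) : tr = traceOf p := by
  induction h with
  | nil => rfl
  | @up n q p tr htr i q' hs a ha ih =>
      have hspec : H.lab (n + 1) q' = Classical.choose (H.lab_src n i q') ::ₘ H.lab n q :=
        (Classical.choose_spec (H.lab_src n i q')).trans
          (congrArg (Classical.choose (H.lab_src n i q') ::ₘ ·) (congrArg (H.lab n) hs))
      have : a = Classical.choose (H.lab_src n i q') :=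
        cons_inj (ha.symm.trans hspec)
      simp [traceOf, ih, this]
  | @down n q p tr htr i a ha ih =>
      have hspec := Classical.choose_spec (H.lab_tgt n i q)
      have : a = Classical.choose (H.lab_tgt n i q) :=
        cons_inj (ha.symm.trans hspec)
      simp [traceOf, ih, this]

lemma trace_unique {y : Σ n : ℕ, H.pre.cell n} {p : LPath H x y}
    {tr tr' : List (S × Bool)} (h : HasTrace p tr) (h' : HasTrace p tr') : tr = tr' :=
  (hasTrace_eq h).trans (hasTrace_eq h').symm

lemma pext_len : ∀ {y z : Σ n : ℕ, H.pre.cell n} {p : LPath H x y} {p' : LPath H x z},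
    PExt p p' → plen p ≤ plen p' := by
  intro y z p p' h
  induction h with
  | refl => exact le_refl _
  | up h i q' hs ih => exact le_trans ih (Nat.le_succ _)
  | down h i ih => exact le_trans ih (Nat.le_succ _)

lemma pext_eq_of_len {y z : Σ n : ℕ, H.pre.cell n} {p : LPath H x y} {p' : LPath H x z}
    (h : PExt p p') (hl : plen p' = plen p) : y = z ∧ HEq p p' := by
  cases h with
  | refl => exact ⟨rfl, HEq.rfl⟩
  | up h i q' hs =>
      exfalso; have := pext_len h; simp [plen] at hl; omega
  | down h i =>
      exfalso; have := pext_len h; simp [plen] at hl; omega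

lemma pext_step {y z : Σ n : ℕ, H.pre.cell n} {p : LPath H x y} {p' : LPath H x z}
    (h : PExt p p') (hl : plen p' = plen p + 1) {tr tr' : List (S × Bool)}
    (ht : HasTrace p tr) (ht' : HasTrace p' tr')
    {a : S} {b : Bool} (htr : tr' = tr ++ [(a, b)]) :
    (b = true ∧ ∃ (q' : H.pre.cell (y.1 + 1)) (i : Fin (y.1 + 1)),
        H.pre.src y.1 i q' = y.2 ∧ z = ⟨y.1 + 1, q'⟩ ∧
        H.lab (y.1 + 1) q' = a ::ₘ H.lab y.1 y.2) ∨
    (b = false ∧ ∃ (m : ℕ) (q : H.pre.cell (m + 1)) (i : Fin (m + 1)),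
        y = ⟨m + 1, q⟩ ∧ z = ⟨m, H.pre.tgt m i q⟩ ∧
        H.lab (m + 1) q = a ::ₘ H.lab m (H.pre.tgt m i q)) := by
  cases h with
  | refl => exfalso; omega
  | up h i q' hs =>
      rename_i n q p''
      have hlen : plen p'' = plen p := by simp [plen] at hl; omega
      obtain ⟨hy, hp⟩ := pext_eq_of_len h hlen
      subst hy
      obtain rfl : p = p'' := eq_of_heq hp
      have e1 : tr = traceOf p := hasTrace_eq ht
      have e2 : tr' = traceOf (LPath.up p i q' hs) := hasTrace_eq ht'
      rw [e1, e2] at htr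
      simp only [traceOf, List.append_cancel_left_eq, List.cons.injEq,
        Prod.mk.injEq, and_true] at htr
      obtain ⟨hc, hb⟩ := htr
      have hspec : H.lab (n + 1) q' = Classical.choose (H.lab_src n i q') ::ₘ H.lab n q :=
        (Classical.choose_spec (H.lab_src n i q')).trans
          (congrArg (Classical.choose (H.lab_src n i q') ::ₘ ·) (congrArg (H.lab n) hs))
      exact Or.inl ⟨hb.symm, q', i, hs, rfl, hc ▸ hspec⟩
  | down h i =>
      rename_i n q p''
      have hlen : plen p'' = plen p := by simp [plen] at hl; omega
      obtain ⟨hy, hp⟩ := pext_eq_of_len h hlen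
      subst hy
      obtain rfl : p = p'' := eq_of_heq hp
      have e1 : tr = traceOf p := hasTrace_eq ht
      have e2 : tr' = traceOf (LPath.down p i) := hasTrace_eq ht'
      rw [e1, e2] at htr
      simp only [traceOf, List.append_cancel_left_eq, List.cons.injEq,
        Prod.mk.injEq, and_true] at htr
      obtain ⟨hc, hb⟩ := htr
      have hspec := Classical.choose_spec (H.lab_tgt n i q)
      exact Or.inr ⟨hb.symm, n, q, i, rfl, rfl, hc ▸ hspec⟩

end SplitBisimAux

open SplitBisimAux in
lemma splitbisim_main {S : Type} {A B : LHDA S} {xA : Σ n : ℕ, A.pre.cell n}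
    {xB : Σ n : ℕ, B.pre.cell n}
    (R : (Σ y : Σ n : ℕ, A.pre.cell n, LPath A xA y) →
         (Σ y : Σ n : ℕ, B.pre.cell n, LPath B xB y) → Prop)
    (h2 : ∀ pA pB, R pA pB → ∀ trA trB, HasTrace pA.2 trA → HasTrace pB.2 trB → trA = trB)
    (h3 : ∀ pA pB, R pA pB → ∀ pA' : Σ y : Σ n : ℕ, A.pre.cell n, LPath A xA y,
        PExt pA.2 pA'.2 → ∃ pB' : Σ y : Σ n : ℕ, B.pre.cell n, LPath B xB y,
          PExt pB.2 pB'.2 ∧ R pA' pB')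
    (h4 : ∀ pA pB, R pA pB → ∀ pB' : Σ y : Σ n : ℕ, B.pre.cell n, LPath B xB y,
        PExt pB.2 pB'.2 → ∃ pA' : Σ y : Σ n : ℕ, A.pre.cell n, LPath A xA y,
          PExt pA.2 pA'.2 ∧ R pA' pB') :
    ∀ (φ : LForm S) (pA : Σ y : Σ n : ℕ, A.pre.cell n, LPath A xA y)
      (pB : Σ y : Σ n : ℕ, B.pre.cell n, LPath B xB y), R pA pB →
      (LSat A φ pA.1.1 pA.1.2 ↔ LSat B φ pB.1.1 pB.1.2) := by
  intro φ
  induction φ with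
  | bot => intro pA pB _; exact Iff.rfl
  | imp α β iha ihb =>
      intro pA pB hR
      exact imp_congr (iha pA pB hR) (ihb pA pB hR)
  | diaS a ψ ih =>
      rintro ⟨⟨nA, qA⟩, pAp⟩ ⟨⟨nB, qB⟩, pBp⟩ hR
      constructor
      · rintro ⟨qA', i, hsrc, hlab, hψ⟩
        obtain ⟨⟨zB, pB'p⟩, hext, hR'⟩ := h3 _ _ hR ⟨⟨nA + 1, qA'⟩, .up pAp i qA' hsrc⟩
          (PExt.up (PExt.refl pAp) i qA' hsrc)
        obtain ⟨trA, htA⟩ := trace_exists pAp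
        obtain ⟨trB, htB⟩ := trace_exists pBp
        obtain ⟨trB', htB'⟩ := trace_exists pB'p
        have htA' : HasTrace (LPath.up pAp i qA' hsrc) (trA ++ [(a, true)]) :=
          HasTrace.up htA i qA' hsrc a hlab
        have e1 : trA = trB := h2 _ _ hR trA trB htA htB
        have e2 : trA ++ [(a, true)] = trB' := h2 _ _ hR' _ _ htA' htB'
        have hlenB : plen pB'p = plen pBp + 1 := by
          rw [← trace_len htB', ← trace_len htB, ← e2, ← e1]; simp
        rcases pext_step hext hlenB htB htB' (by rw [← e2, e1]) with
          ⟨-, q', i', hs', hz, hlab'⟩ | ⟨hb, -⟩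
        · cases hz
          exact ⟨q', i', hs', hlab', (ih _ ⟨⟨nB + 1, q'⟩, pB'p⟩ hR').mp hψ⟩
        · exact absurd hb (by simp)
      · rintro ⟨qB', i, hsrc, hlab, hψ⟩
        obtain ⟨⟨zA, pA'p⟩, hext, hR'⟩ := h4 _ _ hR ⟨⟨nB + 1, qB'⟩, .up pBp i qB' hsrc⟩
          (PExt.up (PExt.refl pBp) i qB' hsrc)
        obtain ⟨trA, htA⟩ := trace_exists pAp
        obtain ⟨trB, htB⟩ := trace_exists pBp
        obtain ⟨trA', htA'⟩ := trace_exists pA'p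
        have htB' : HasTrace (LPath.up pBp i qB' hsrc) (trB ++ [(a, true)]) :=
          HasTrace.up htB i qB' hsrc a hlab
        have e1 : trA = trB := h2 _ _ hR trA trB htA htB
        have e2 : trA' = trB ++ [(a, true)] := h2 _ _ hR' _ _ htA' htB'
        have hlenA : plen pA'p = plen pAp + 1 := by
          rw [← trace_len htA', ← trace_len htA, e2, e1]; simp
        rcases pext_step hext hlenA htA htA' (by rw [e2, e1]) with
          ⟨-, q', i', hs', hz, hlab'⟩ | ⟨hb, -⟩
        · cases hz
          exact ⟨q', i', hs', hlab', (ih ⟨⟨nA + 1, q'⟩, pA'p⟩ _ hR').mpr hψ⟩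
        · exact absurd hb (by simp)
  | diaT a ψ ih =>
      rintro ⟨⟨nA, qA⟩, pAp⟩ ⟨⟨nB, qB⟩, pBp⟩ hR
      constructor
      · match nA, qA, pAp, hR with
        | 0, qA, pAp, hR => exact fun hfalse => hfalse.elim
        | m + 1, qA, pAp, hR =>
          rintro ⟨i, hlab, hψ⟩
          obtain ⟨⟨zB, pB'p⟩, hext, hR'⟩ := h3 _ _ hR ⟨⟨m, A.pre.tgt m i qA⟩, .down pAp i⟩
            (PExt.down (PExt.refl pAp) i)
          obtain ⟨trA, htA⟩ := trace_exists pAp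
          obtain ⟨trB, htB⟩ := trace_exists pBp
          obtain ⟨trB', htB'⟩ := trace_exists pB'p
          have htA' : HasTrace (LPath.down pAp i) (trA ++ [(a, false)]) :=
            HasTrace.down htA i a hlab
          have e1 : trA = trB := h2 _ _ hR trA trB htA htB
          have e2 : trA ++ [(a, false)] = trB' := h2 _ _ hR' _ _ htA' htB'
          have hlenB : plen pB'p = plen pBp + 1 := by
            rw [← trace_len htB', ← trace_len htB, ← e2, ← e1]; simp
          rcases pext_step hext hlenB htB htB' (by rw [← e2, e1]) with
            ⟨hb, -⟩ | ⟨-, m', q, i', hy, hz, hlab'⟩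
          · exact absurd hb (by simp)
          · have h1 : nB = m' + 1 := congrArg Sigma.fst hy
            subst h1
            have h2' : qB = q := by
              simpa using hy
            subst h2'
            cases hz
            exact ⟨i', hlab', (ih _ ⟨⟨m', B.pre.tgt m' i' qB⟩, pB'p⟩ hR').mp hψ⟩
      · match nB, qB, pBp, hR with
        | 0, qB, pBp, hR => exact fun hfalse => hfalse.elim
        | m + 1, qB, pBp, hR =>
          rintro ⟨i, hlab, hψ⟩
          obtain ⟨⟨zA, pA'p⟩, hext, hR'⟩ := h4 _ _ hR ⟨⟨m, B.pre.tgt m i qB⟩, .down pBp i⟩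
            (PExt.down (PExt.refl pBp) i)
          obtain ⟨trA, htA⟩ := trace_exists pAp
          obtain ⟨trB, htB⟩ := trace_exists pBp
          obtain ⟨trA', htA'⟩ := trace_exists pA'p
          have htB' : HasTrace (LPath.down pBp i) (trB ++ [(a, false)]) :=
            HasTrace.down htB i a hlab
          have e1 : trA = trB := h2 _ _ hR trA trB htA htB
          have e2 : trA' = trB ++ [(a, false)] := h2 _ _ hR' _ _ htA' htB'
          have hlenA : plen pA'p = plen pAp + 1 := by
            rw [← trace_len htA', ← trace_len htA, e2, e1]; simp
          rcases pext_step hext hlenA htA htA' (by rw [e2, e1]) with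
            ⟨hb, -⟩ | ⟨-, m', q, i', hy, hz, hlab'⟩
          · exact absurd hb (by simp)
          · have h1 : nA = m' + 1 := congrArg Sigma.fst hy
            subst h1
            have h2' : qA = q := by
              simpa using hy
            subst h2'
            cases hz
            exact ⟨i', hlab', (ih ⟨⟨m', A.pre.tgt m' i' qA⟩, pA'p⟩ _ hR').mpr hψ⟩

/-- split-bisimilar pointed labeled HDAs are modally equivalent for
labeled HDML. -/
theorem splitbisim_implies_modal_equivalence {S : Type} (A B : LHDA S)
    (xA : Σ n : ℕ, A.pre.cell n) (xB : Σ n : ℕ, B.pre.cell n)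
    (h : SplitBisim A xA B xB) :
    ∀ φ : LForm S, LSat A φ xA.1 xA.2 ↔ LSat B φ xB.1 xB.2 := by
  obtain ⟨R, hR0, h2, h3, h4⟩ := h
  intro φ
  exact splitbisim_main R h2 h3 h4 φ ⟨xA, LPath.nil⟩ ⟨xB, LPath.nil⟩ hR0
end

section
/- HDML modal equivalence implies split-bisimilarity under image-finiteness: let (H_A, q_A⁰) and (H_B, q_B⁰) be pointed labeled HDAs with finite nondeterminism and finite concurrency, i.e. for every cell q and label a ∈ Σ, the set of cells q' with s_i(q') = q for some i and l(q') = l(q) ⊎ {a} is finite, and the set of cells q' with t_i(q) = q' for some i is finite. If (H_A, q_A⁰) and (H_B, q_B⁰) are modally equivalent (they satisfy exactly the same labeled HDML formulas), then they are split-bisimilar. -/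
section Aux

variable {S : Type}

/-- Modal equivalence of pointed labeled HDAs. -/
def MEq (H1 H2 : LHDA S) (x : Σ n : ℕ, H1.pre.cell n) (y : Σ n : ℕ, H2.pre.cell n) : Prop :=
  ∀ φ : LForm S, LSat H1 φ x.1 x.2 ↔ LSat H2 φ y.1 y.2

/-- Finite conjunction of labeled formulas. -/
def lconj : List (LForm S) → LForm S
  | [] => .imp .bot .bot
  | φ :: l => .imp (.imp φ (.imp (lconj l) .bot)) .bot

lemma lSat_lconj (H : LHDA S) (l : List (LForm S)) (n : ℕ) (q : H.pre.cell n) :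
    LSat H (lconj l) n q ↔ ∀ φ ∈ l, LSat H φ n q := by
  induction l with
  | nil => simp [lconj, LSat]
  | cons φ l ih =>
    simp only [lconj, LSat, List.mem_cons, ih]
    constructor
    · intro h ψ hψ
      by_contra hns
      apply h
      intro hφ hall
      rcases hψ with rfl | hψ
      · exact hns hφ
      · exact hns (hall ψ hψ)
    · intro h hc
      exact hc (h φ (Or.inl rfl)) fun ψ hψ => h ψ (Or.inr hψ)

lemma distinguish {H1 H2 : LHDA S} {x : Σ n : ℕ, H1.pre.cell n} {y : Σ n : ℕ, H2.pre.cell n}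
    (h : ¬ MEq H1 H2 x y) : ∃ φ, LSat H1 φ x.1 x.2 ∧ ¬ LSat H2 φ y.1 y.2 := by
  simp only [MEq, not_forall] at h
  obtain ⟨φ, hφ⟩ := h
  by_cases h1 : LSat H1 φ x.1 x.2
  · by_cases h2 : LSat H2 φ y.1 y.2
    · exact absurd (iff_of_true h1 h2) hφ
    · exact ⟨φ, h1, h2⟩
  · by_cases h2 : LSat H2 φ y.1 y.2
    · exact ⟨.imp φ .bot, fun h => absurd h h1, fun hn => hn h2⟩
    · exact absurd (iff_of_false h1 h2) hφ

end Aux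

section Aux2

variable {S : Type}

lemma LSat_diaS (H : LHDA S) (a : S) (ψ : LForm S) (n : ℕ) (q : H.pre.cell n) :
    LSat H (.diaS a ψ) n q ↔ ∃ (q' : H.pre.cell (n + 1)) (i : Fin (n + 1)),
      H.pre.src n i q' = q ∧ H.lab (n + 1) q' = a ::ₘ H.lab n q ∧ LSat H ψ (n + 1) q' :=
  Iff.rfl

lemma LSat_diaT_succ (H : LHDA S) (a : S) (ψ : LForm S) (m : ℕ) (q : H.pre.cell (m + 1)) :
    LSat H (.diaT a ψ) (m + 1) q ↔ ∃ i : Fin (m + 1),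
      H.lab (m + 1) q = a ::ₘ H.lab m (H.pre.tgt m i q) ∧ LSat H ψ m (H.pre.tgt m i q) :=
  Iff.rfl

lemma LSat_diaT_zero (H : LHDA S) (a : S) (ψ : LForm S) (q : H.pre.cell 0) :
    ¬ LSat H (.diaT a ψ) 0 q := fun h => h

lemma stepS (H1 H2 : LHDA S)
    (hfins2 : ∀ (n : ℕ) (q : H2.pre.cell n) (a : S),
      {q' : H2.pre.cell (n + 1) |
        (∃ i : Fin (n + 1), H2.pre.src n i q' = q) ∧
          H2.lab (n + 1) q' = a ::ₘ H2.lab n q}.Finite)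
    (x : Σ n : ℕ, H1.pre.cell n) (y : Σ n : ℕ, H2.pre.cell n) (hE : MEq H1 H2 x y)
    (a : S) (q1' : H1.pre.cell (x.1 + 1)) (i : Fin (x.1 + 1))
    (hs : H1.pre.src x.1 i q1' = x.2) (hl : H1.lab (x.1 + 1) q1' = a ::ₘ H1.lab x.1 x.2) :
    ∃ (q2' : H2.pre.cell (y.1 + 1)) (j : Fin (y.1 + 1)),
      H2.pre.src y.1 j q2' = y.2 ∧ H2.lab (y.1 + 1) q2' = a ::ₘ H2.lab y.1 y.2 ∧
      MEq H1 H2 ⟨x.1 + 1, q1'⟩ ⟨y.1 + 1, q2'⟩ := by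
  classical
  by_contra hno
  push_neg at hno
  set dist : H2.pre.cell (y.1 + 1) → LForm S := fun q' =>
    if h : ¬ MEq H1 H2 ⟨x.1 + 1, q1'⟩ ⟨y.1 + 1, q'⟩ then Classical.choose (distinguish h)
    else .imp .bot .bot with hdist
  set L := ((hfins2 y.1 y.2 a).toFinset.toList).map dist with hL
  have hsat1 : ∀ φ ∈ L, LSat H1 φ (x.1 + 1) q1' := by
    intro φ hφ
    rw [hL, List.mem_map] at hφ
    obtain ⟨q', _, rfl⟩ := hφ
    rw [hdist]
    by_cases h : ¬ MEq H1 H2 ⟨x.1 + 1, q1'⟩ ⟨y.1 + 1, q'⟩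
    · simp only [dif_pos h]
      exact (Classical.choose_spec (distinguish h)).1
    · simp only [dif_neg h]
      exact fun hf => hf
  have hA : LSat H1 (.diaS a (lconj L)) x.1 x.2 := by
    rw [LSat_diaS]
    exact ⟨q1', i, hs, hl, (lSat_lconj _ _ _ _).mpr hsat1⟩
  have hB := (hE _).mp hA
  rw [LSat_diaS] at hB
  obtain ⟨q2', j, hj, hl2, hcj⟩ := hB
  have hmem : q2' ∈ (hfins2 y.1 y.2 a).toFinset := by
    rw [Set.Finite.mem_toFinset]
    exact ⟨⟨j, hj⟩, hl2⟩
  have hnm : ¬ MEq H1 H2 ⟨x.1 + 1, q1'⟩ ⟨y.1 + 1, q2'⟩ := hno q2' j hj hl2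
  have hmemL : dist q2' ∈ L := by
    rw [hL, List.mem_map]
    exact ⟨q2', Finset.mem_toList.mpr hmem, rfl⟩
  have := (lSat_lconj _ _ _ _).mp hcj (dist q2') hmemL
  rw [hdist] at this
  simp only [dif_pos hnm] at this
  exact (Classical.choose_spec (distinguish hnm)).2 this

lemma stepT (H1 H2 : LHDA S)
    (hfint2 : ∀ (n : ℕ) (q : H2.pre.cell (n + 1)),
      {q' : H2.pre.cell n | ∃ i : Fin (n + 1), H2.pre.tgt n i q = q'}.Finite)
    (m1 m2 : ℕ) (q1 : H1.pre.cell (m1 + 1)) (q2 : H2.pre.cell (m2 + 1))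
    (hE : MEq H1 H2 ⟨m1 + 1, q1⟩ ⟨m2 + 1, q2⟩) (a : S) (i : Fin (m1 + 1))
    (hl : H1.lab (m1 + 1) q1 = a ::ₘ H1.lab m1 (H1.pre.tgt m1 i q1)) :
    ∃ j : Fin (m2 + 1), H2.lab (m2 + 1) q2 = a ::ₘ H2.lab m2 (H2.pre.tgt m2 j q2) ∧
      MEq H1 H2 ⟨m1, H1.pre.tgt m1 i q1⟩ ⟨m2, H2.pre.tgt m2 j q2⟩ := by
  classical
  by_contra hno
  push_neg at hno
  set dist : H2.pre.cell m2 → LForm S := fun q' =>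
    if h : ¬ MEq H1 H2 ⟨m1, H1.pre.tgt m1 i q1⟩ ⟨m2, q'⟩ then Classical.choose (distinguish h)
    else .imp .bot .bot with hdist
  set L := ((hfint2 m2 q2).toFinset.toList).map dist with hL
  have hsat1 : ∀ φ ∈ L, LSat H1 φ m1 (H1.pre.tgt m1 i q1) := by
    intro φ hφ
    rw [hL, List.mem_map] at hφ
    obtain ⟨q', _, rfl⟩ := hφ
    rw [hdist]
    by_cases h : ¬ MEq H1 H2 ⟨m1, H1.pre.tgt m1 i q1⟩ ⟨m2, q'⟩
    · simp only [dif_pos h]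
      exact (Classical.choose_spec (distinguish h)).1
    · simp only [dif_neg h]
      exact fun hf => hf
  have hA : LSat H1 (.diaT a (lconj L)) (m1 + 1) q1 := by
    rw [LSat_diaT_succ]
    exact ⟨i, hl, (lSat_lconj _ _ _ _).mpr hsat1⟩
  have hB := (hE _).mp hA
  rw [LSat_diaT_succ] at hB
  obtain ⟨j, hl2, hcj⟩ := hB
  have hmem : H2.pre.tgt m2 j q2 ∈ (hfint2 m2 q2).toFinset := by
    rw [Set.Finite.mem_toFinset]
    exact ⟨j, rfl⟩
  have hnm : ¬ MEq H1 H2 ⟨m1, H1.pre.tgt m1 i q1⟩ ⟨m2, H2.pre.tgt m2 j q2⟩ := hno j hl2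
  have hmemL : dist (H2.pre.tgt m2 j q2) ∈ L := by
    rw [hL, List.mem_map]
    exact ⟨_, Finset.mem_toList.mpr hmem, rfl⟩
  have := (lSat_lconj _ _ _ _).mp hcj (dist _) hmemL
  rw [hdist] at this
  simp only [dif_pos hnm] at this
  exact (Classical.choose_spec (distinguish hnm)).2 this

end Aux2

section Aux3

variable {S : Type}

lemma label_unique {m : Multiset S} {a b : S}
    (h : a ::ₘ m = b ::ₘ m) : a = b := (Multiset.cons_inj_left m).mp h

noncomputable def traceOf {H : LHDA S} {x : Σ n : ℕ, H.pre.cell n} :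
    ∀ {y : Σ n : ℕ, H.pre.cell n}, LPath H x y → List (S × Bool)
  | _, .nil => []
  | _, .up p i q' _ => traceOf p ++ [(Classical.choose (H.lab_src _ i q'), true)]
  | _, @LPath.down _ _ _ n q p i => traceOf p ++ [(Classical.choose (H.lab_tgt n i q), false)]

lemma hasTrace_eq {H : LHDA S} {x : Σ n : ℕ, H.pre.cell n} :
    ∀ {y : Σ n : ℕ, H.pre.cell n} {p : LPath H x y} {tr : List (S × Bool)},
      HasTrace p tr → tr = traceOf p := by
  intro y p tr h1
  induction h1 with
  | nil => rfl
  | @up n q p tr htr i q' h a ha ih =>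
    have hle : H.lab n (H.pre.src n i q') = H.lab n q := congrArg (H.lab n) h
    have hc := Classical.choose_spec (H.lab_src n i q')
    have hc2 : H.lab (n + 1) q' = Classical.choose (H.lab_src n i q') ::ₘ H.lab n q :=
      hc.trans (congrArg (Classical.choose (H.lab_src n i q') ::ₘ ·) hle)
    rw [traceOf, ih, label_unique (hc2.symm.trans ha)]
  | @down n q p tr htr i a ha ih =>
    have hc := Classical.choose_spec (H.lab_tgt n i q)
    rw [traceOf, ih, label_unique (hc.symm.trans ha)]

lemma hasTrace_unique {H : LHDA S} {x y : Σ n : ℕ, H.pre.cell n} {p : LPath H x y}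
    {tr tr' : List (S × Bool)} (h1 : HasTrace p tr) (h2 : HasTrace p tr') : tr = tr' :=
  (hasTrace_eq h1).trans (hasTrace_eq h2).symm

lemma hasTrace_exists {H : LHDA S} {x : Σ n : ℕ, H.pre.cell n} :
    ∀ {y : Σ n : ℕ, H.pre.cell n} (p : LPath H x y), ∃ tr, HasTrace p tr := by
  intro y p
  induction p with
  | nil => exact ⟨[], .nil⟩
  | up p i q' h ih =>
    obtain ⟨tr, htr⟩ := ih
    obtain ⟨a, ha⟩ := H.lab_src _ i q'
    rw [h] at ha
    exact ⟨tr ++ [(a, true)], .up htr i q' h a ha⟩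
  | down p i ih =>
    obtain ⟨tr, htr⟩ := ih
    obtain ⟨a, ha⟩ := H.lab_tgt _ i _
    exact ⟨tr ++ [(a, false)], .down htr i a ha⟩

lemma forward_ext (H1 H2 : LHDA S)
    (hfins2 : ∀ (n : ℕ) (q : H2.pre.cell n) (a : S),
      {q' : H2.pre.cell (n + 1) |
        (∃ i : Fin (n + 1), H2.pre.src n i q' = q) ∧
          H2.lab (n + 1) q' = a ::ₘ H2.lab n q}.Finite)
    (hfint2 : ∀ (n : ℕ) (q : H2.pre.cell (n + 1)),
      {q' : H2.pre.cell n | ∃ i : Fin (n + 1), H2.pre.tgt n i q = q'}.Finite)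
    (x1 : Σ n : ℕ, H1.pre.cell n) (x2 : Σ n : ℕ, H2.pre.cell n) :
    ∀ {y1 z1 : Σ n : ℕ, H1.pre.cell n} {p1 : LPath H1 x1 y1} {p1' : LPath H1 x1 z1},
      PExt p1 p1' →
      ∀ {y2 : Σ n : ℕ, H2.pre.cell n} (p2 : LPath H2 x2 y2) (tr : List (S × Bool)),
        MEq H1 H2 y1 y2 → HasTrace p1 tr → HasTrace p2 tr →
        ∃ (y2' : Σ n : ℕ, H2.pre.cell n) (p2' : LPath H2 x2 y2') (tr' : List (S × Bool)),
          PExt p2 p2' ∧ MEq H1 H2 z1 y2' ∧ HasTrace p1' tr' ∧ HasTrace p2' tr' := by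
  intro y1 z1 p1 p1' hext
  induction hext with
  | refl p =>
    intro y2 p2 tr hE h1 h2
    exact ⟨y2, p2, tr, .refl _, hE, h1, h2⟩
  | @up n q p p' h i q' hs ih =>
    intro y2 p2 tr hE h1 h2
    obtain ⟨y2', p2', tr', hpext, hE', h1', h2'⟩ := ih p2 tr hE h1 h2
    obtain ⟨a, ha⟩ := H1.lab_src _ i q'
    rw [hs] at ha
    obtain ⟨q2', j, hj, hl2, hE''⟩ := stepS H1 H2 hfins2 _ y2' hE' a q' i hs ha
    exact ⟨⟨y2'.1 + 1, q2'⟩, .up p2' j q2' hj, tr' ++ [(a, true)],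
      .up hpext j q2' hj, hE'', .up h1' i q' hs a ha, .up h2' j q2' hj a hl2⟩
  | @down n q p p' h i ih =>
    intro y2 p2 tr hE h1 h2
    obtain ⟨y2', p2', tr', hpext, hE', h1', h2'⟩ := ih p2 tr hE h1 h2
    obtain ⟨a, ha⟩ := H1.lab_tgt _ i q
    obtain ⟨m2, q2, rfl⟩ : ∃ (m2 : ℕ) (q2 : H2.pre.cell (m2 + 1)), y2' = ⟨m2 + 1, q2⟩ := by
      have hA : LSat H1 (.diaT a (.imp .bot .bot)) (n + 1) q := by
        rw [LSat_diaT_succ]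
        exact ⟨i, ha, fun hf => hf⟩
      have hB := (hE' _).mp hA
      match y2', hB with
      | ⟨0, q2⟩, hB => exact absurd hB (LSat_diaT_zero H2 _ _ _)
      | ⟨m + 1, q2⟩, _ => exact ⟨m, q2, rfl⟩
    obtain ⟨j, hl2, hE''⟩ := stepT H1 H2 hfint2 _ _ q q2 hE' a i ha
    exact ⟨_, .down p2' j, tr' ++ [(a, false)], .down hpext j, hE'',
      .down h1' i a ha, .down h2' j a hl2⟩

end Aux3

/-- under finite nondeterminism and finite concurrency, modally equivalent
pointed labeled HDAs are split-bisimilar. -/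
theorem modal_equivalence_implies_splitbisim {S : Type} (A B : LHDA S)
    (xA : Σ n : ℕ, A.pre.cell n) (xB : Σ n : ℕ, B.pre.cell n)
    (hfinsA : ∀ (n : ℕ) (q : A.pre.cell n) (a : S),
      {q' : A.pre.cell (n + 1) |
        (∃ i : Fin (n + 1), A.pre.src n i q' = q) ∧ A.lab (n + 1) q' = a ::ₘ A.lab n q}.Finite)
    (hfintA : ∀ (n : ℕ) (q : A.pre.cell (n + 1)),
      {q' : A.pre.cell n | ∃ i : Fin (n + 1), A.pre.tgt n i q = q'}.Finite)
    (hfinsB : ∀ (n : ℕ) (q : B.pre.cell n) (a : S),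
      {q' : B.pre.cell (n + 1) |
        (∃ i : Fin (n + 1), B.pre.src n i q' = q) ∧ B.lab (n + 1) q' = a ::ₘ B.lab n q}.Finite)
    (hfintB : ∀ (n : ℕ) (q : B.pre.cell (n + 1)),
      {q' : B.pre.cell n | ∃ i : Fin (n + 1), B.pre.tgt n i q = q'}.Finite)
    (heq : ∀ φ : LForm S, LSat A φ xA.1 xA.2 ↔ LSat B φ xB.1 xB.2) :
    SplitBisim A xA B xB := by
  classical
  refine ⟨fun pA pB => MEq A B pA.1 pB.1 ∧ ∃ tr, HasTrace pA.2 tr ∧ HasTrace pB.2 tr,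
    ⟨heq, [], .nil, .nil⟩, ?_, ?_, ?_⟩
  · rintro pA pB ⟨-, tr, h1, h2⟩ trA trB hA hB
    exact (hasTrace_unique hA h1).trans (hasTrace_unique h2 hB)
  · rintro pA pB ⟨hE, tr, h1, h2⟩ pA' hext
    obtain ⟨y2', p2', tr', hpext, hE', h1', h2'⟩ :=
      forward_ext A B hfinsB hfintB xA xB hext pB.2 tr hE h1 h2
    exact ⟨⟨y2', p2'⟩, hpext, hE', tr', h1', h2'⟩
  · rintro pA pB ⟨hE, tr, h1, h2⟩ pB' hext
    obtain ⟨y1', p1', tr', hpext, hE', h2', h1'⟩ :=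
      forward_ext B A hfinsA hfintA xB xA hext pA.2 tr (fun φ => (hE φ).symm) h2 h1
    exact ⟨⟨y1', p1'⟩, hpext, fun φ => (hE' φ).symm, tr', h1', h2'⟩
end

section
/- Invariance of HDML satisfaction under forward generated pseudo HDAs: let M be an HDML model, q a cell of M, and P(q) the forward generated pseudo HDA for q. Then for every HDML formula φ and every cell q^p belonging to P(q): M,q^p ⊨ φ if and only if P(q),q^p ⊨ φ (where satisfaction in P(q) uses the same semantic clauses, with the existential witnesses required to belong to P(q)). -/
/-- Membership in the forward generated pseudo HDA for the cell `q0`: the smallest set of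
cells containing `q0`, closed under taking cells of which a member is a source, and under
targets of members. -/
inductive InPseudo (H : PreCubical) {n0 : ℕ} (q0 : H.cell n0) : ∀ n : ℕ, H.cell n → Prop
  | base : InPseudo H q0 n0 q0
  | up {n : ℕ} {q' : H.cell n} (h : InPseudo H q0 n q') (i : Fin (n + 1))
      (q'' : H.cell (n + 1)) (hs : H.src n i q'' = q') : InPseudo H q0 (n + 1) q''
  | down {n : ℕ} {q' : H.cell (n + 1)} (h : InPseudo H q0 (n + 1) q') (i : Fin (n + 1)) :
      InPseudo H q0 n (H.tgt n i q')

/-- Satisfaction relativized to a subfamily `P` of cells: the semantic clauses are the same,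
with the existential witnesses required to belong to `P`. -/
def SatIn {Phi : Type} (H : PreCubical) (V : ∀ n : ℕ, H.cell n → Set Phi)
    (P : ∀ n : ℕ, H.cell n → Prop) : HForm Phi → ∀ n : ℕ, H.cell n → Prop
  | .atom p, n, q => p ∈ V n q
  | .bot, _, _ => False
  | .imp a b, n, q => SatIn H V P a n q → SatIn H V P b n q
  | .diaS a, n, q => ∃ (q' : H.cell (n + 1)) (i : Fin (n + 1)),
      H.src n i q' = q ∧ P (n + 1) q' ∧ SatIn H V P a (n + 1) q'
  | .diaT _, 0, _ => False
  | .diaT a, m + 1, q => ∃ i : Fin (m + 1), P m (H.tgt m i q) ∧ SatIn H V P a m (H.tgt m i q)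

/-- Invariance under forward generated pseudo HDAs: for every cell `q^p` of
the forward generated pseudo HDA `P(q0)` and every formula `φ`:
`M,q^p ⊨ φ` iff `P(q0),q^p ⊨ φ`. -/
theorem pseudo_hda_invariance {Phi : Type} (M : HDMLModel Phi) {n0 : ℕ}
    (q0 : M.pre.cell n0) :
    ∀ (φ : HForm Phi) (n : ℕ) (qp : M.pre.cell n), InPseudo M.pre q0 n qp →
      (M.Sat φ n qp ↔ SatIn M.pre M.val (InPseudo M.pre q0) φ n qp) := by
  intro φ
  induction φ with
  | atom p => intro n qp _; rfl
  | bot => intro n qp _; rfl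
  | imp a b iha ihb =>
    intro n qp h
    simp only [HDMLModel.Sat, PreCubical.Sat, SatIn]
    exact imp_congr (iha n qp h) (ihb n qp h)
  | diaS a ih =>
    intro n qp h
    constructor
    · rintro ⟨q', i, hs, hsat⟩
      have hq' : InPseudo M.pre q0 (n + 1) q' := .up h i q' hs
      exact ⟨q', i, hs, hq', (ih (n + 1) q' hq').mp hsat⟩
    · rintro ⟨q', i, hs, hq', hsat⟩
      exact ⟨q', i, hs, (ih (n + 1) q' hq').mpr hsat⟩
  | diaT a ih =>
    intro n qp h
    cases n with
    | zero => exact Iff.rfl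
    | succ m =>
      constructor
      · rintro ⟨i, hsat⟩
        have ht : InPseudo M.pre q0 m (M.pre.tgt m i qp) := .down h i
        exact ⟨i, ht, (ih m _ ht).mp hsat⟩
      · rintro ⟨i, ht, hsat⟩
        exact ⟨i, (ih m _ ht).mpr hsat⟩
end
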